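/- arXiv:math/0306071 — 7 statements merged into one kernel-verified Lean document; each statement's English description precedes it below -/
import Mathlib

section
/- Triangle lemma (Lemma 4.2): Fix ε > 0, δ ≥ 0 and R ≥ 0. Let X be a δ-hyperbolic geodesic metric space and let U ⊆ X be a nonempty subset that is quasi-convex with constant R. If y ∈ X, y' ∈ proj_U^ε(y), and u ∈ U, then d(y,y') + d(y',u) ≤ d(y,u) + (2ε + 4δ + 2R). -/
/-- `γ` is a geodesic segment from `u` to `v`: an isometric embedding of
`[0, dist u v]` sending the endpoints to `u` and `v`. -/
def IsGeodesicSegment {X : Type*} [MetricSpace X] (γ : ℝ → X) (u v : X) : Prop :=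
  γ 0 = u ∧ γ (dist u v) = v ∧
    ∀ s ∈ Set.Icc (0 : ℝ) (dist u v), ∀ t ∈ Set.Icc (0 : ℝ) (dist u v),
      dist (γ s) (γ t) = |s - t|

/-- A metric space is geodesic if every pair of points is joined by a geodesic. -/
def GeodesicSpace (X : Type*) [MetricSpace X] : Prop :=
  ∀ u v : X, ∃ γ : ℝ → X, IsGeodesicSegment γ u v

/-- `X` is `δ`-hyperbolic: every geodesic triangle is `δ`-thin, i.e. each side is
contained in the closed `δ`-neighborhood of the union of the other two sides. -/
def DeltaHyperbolic (X : Type*) [MetricSpace X] (δ : ℝ) : Prop :=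
  ∀ (x y z : X) (γ₁ γ₂ γ₃ : ℝ → X),
    IsGeodesicSegment γ₁ x y → IsGeodesicSegment γ₂ y z → IsGeodesicSegment γ₃ x z →
    ∀ p ∈ γ₃ '' Set.Icc (0 : ℝ) (dist x z),
      ∃ q ∈ (γ₁ '' Set.Icc (0 : ℝ) (dist x y)) ∪ (γ₂ '' Set.Icc (0 : ℝ) (dist y z)),
        dist p q ≤ δ

/-- `U` is quasi-convex with constant `R`: every geodesic segment between points of `U`
lies in the closed `R`-neighborhood of `U`. -/
def QuasiConvexWith {X : Type*} [MetricSpace X] (U : Set X) (R : ℝ) : Prop :=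
  ∀ u ∈ U, ∀ v ∈ U, ∀ γ : ℝ → X, IsGeodesicSegment γ u v →
    ∀ p ∈ γ '' Set.Icc (0 : ℝ) (dist u v), ∃ w ∈ U, dist p w ≤ R

/-- The quasi-projection of `y` to `U`: the points of `U` which are, within an error
of `ε`, closest to `y`. -/
noncomputable def quasiProj {X : Type*} [MetricSpace X] (U : Set X) (ε : ℝ) (y : X) :
    Set X :=
  {y' ∈ U | dist y y' ≤ Metric.infDist y U + ε}


open Metric Set in
lemma IsGeodesicSegment.continuousOn' {X : Type*} [MetricSpace X] {γ : ℝ → X} {u v : X}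
    (h : IsGeodesicSegment γ u v) : ContinuousOn γ (Set.Icc 0 (dist u v)) := by
  refine (LipschitzOnWith.of_dist_le_mul (K := 1) ?_).continuousOn
  intro s hs t ht
  rw [h.2.2 s hs t ht, Real.dist_eq, NNReal.coe_one, one_mul]

/-- **Triangle lemma** (Lemma 4.2). -/
theorem triangle_lemma {X : Type*} [MetricSpace X] (ε δ R : ℝ)
    (hε : 0 < ε) (hδ : 0 ≤ δ) (hR : 0 ≤ R)
    (hgeo : GeodesicSpace X) (hhyp : DeltaHyperbolic X δ)
    (U : Set X) (hUne : U.Nonempty) (hU : QuasiConvexWith U R)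
    (y y' u : X) (hy' : y' ∈ quasiProj U ε y) (hu : u ∈ U) :
    dist y y' + dist y' u ≤ dist y u + (2 * ε + 4 * δ + 2 * R) := by
  classical
  obtain ⟨hy'U, hy'd⟩ := hy'
  obtain ⟨γ₁, h1⟩ := hgeo y' y
  obtain ⟨γ₂, h2⟩ := hgeo y u
  obtain ⟨γ₃, h3⟩ := hgeo y' u
  set L1 := dist y' y with hL1
  set L2 := dist y u with hL2
  set L3 := dist y' u with hL3
  set K1 := γ₁ '' Set.Icc (0:ℝ) L1 with hK1
  set K2 := γ₂ '' Set.Icc (0:ℝ) L2 with hK2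
  have h0L1 : (0:ℝ) ∈ Set.Icc (0:ℝ) L1 := ⟨le_refl 0, dist_nonneg⟩
  have h0L2 : (0:ℝ) ∈ Set.Icc (0:ℝ) L2 := ⟨le_refl 0, dist_nonneg⟩
  have h0L3 : (0:ℝ) ∈ Set.Icc (0:ℝ) L3 := ⟨le_refl 0, dist_nonneg⟩
  have hLL1 : L1 ∈ Set.Icc (0:ℝ) L1 := ⟨dist_nonneg, le_refl _⟩
  have hLL2 : L2 ∈ Set.Icc (0:ℝ) L2 := ⟨dist_nonneg, le_refl _⟩
  have hLL3 : L3 ∈ Set.Icc (0:ℝ) L3 := ⟨dist_nonneg, le_refl _⟩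
  have hK1c : IsCompact K1 := isCompact_Icc.image_of_continuousOn h1.continuousOn'
  have hK2c : IsCompact K2 := isCompact_Icc.image_of_continuousOn h2.continuousOn'
  have hK1ne : K1.Nonempty := ⟨γ₁ 0, 0, h0L1, rfl⟩
  have hK2ne : K2.Nonempty := ⟨γ₂ 0, 0, h0L2, rfl⟩
  set f : ℝ → ℝ := fun t => Metric.infDist (γ₃ t) K1 with hf
  set g : ℝ → ℝ := fun t => Metric.infDist (γ₃ t) K2 with hg
  have hcf : ContinuousOn (fun t => f t - g t) (Set.Icc 0 L3) := by
    exact (((Metric.continuous_infDist_pt K1).comp_continuousOn h3.continuousOn').sub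
      (((Metric.continuous_infDist_pt K2).comp_continuousOn h3.continuousOn')))
  have hf0 : f 0 = 0 := by
    have : γ₃ 0 ∈ K1 := by
      rw [h3.1]
      exact ⟨0, h0L1, h1.1⟩
    simpa [hf] using Metric.infDist_zero_of_mem this
  have hgL : g L3 = 0 := by
    have : γ₃ L3 ∈ K2 := by
      rw [h3.2.1]
      exact ⟨L2, hLL2, h2.2.1⟩
    simpa [hg] using Metric.infDist_zero_of_mem this
  have hmem : (0:ℝ) ∈ Set.Icc (f 0 - g 0) (f L3 - g L3) := by
    constructor
    · rw [hf0]
      simp only [zero_sub, neg_nonpos]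
      exact Metric.infDist_nonneg
    · rw [hgL]
      simp only [sub_zero]
      exact Metric.infDist_nonneg
  obtain ⟨t, ht, hfg⟩ := intermediate_value_Icc dist_nonneg hcf hmem
  have hfg' : f t = g t := by linarith [sub_eq_zero.mp hfg]
  -- the point m on the side [y', u]
  set m := γ₃ t with hm
  have hmside : m ∈ γ₃ '' Set.Icc (0:ℝ) (dist y' u) := ⟨t, ht, rfl⟩
  -- hyperbolicity : m is δ-close to one of the other sides, hence (by f t = g t) to both
  obtain ⟨q, hq, hqd⟩ := hhyp y' y u γ₁ γ₂ γ₃ h1 h2 h3 m hmside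
  have hftδ : f t ≤ δ ∧ g t ≤ δ := by
    rcases hq with hq | hq
    · have : f t ≤ δ := le_trans (Metric.infDist_le_dist_of_mem hq) hqd
      exact ⟨this, hfg' ▸ this⟩
    · have : g t ≤ δ := le_trans (Metric.infDist_le_dist_of_mem hq) hqd
      exact ⟨hfg' ▸ this, this⟩
  -- extract closest points a ∈ K1, b ∈ K2
  obtain ⟨a, haK, hfa⟩ := hK1c.exists_infDist_eq_dist hK1ne m
  obtain ⟨b, hbK, hgb⟩ := hK2c.exists_infDist_eq_dist hK2ne m
  have hma : dist m a ≤ δ := by rw [← hfa]; exact hftδ.1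
  have hmb : dist m b ≤ δ := by rw [← hgb]; exact hftδ.2
  obtain ⟨s, hs, rfl⟩ := haK
  obtain ⟨r, hr, rfl⟩ := hbK
  -- quasi-convexity at m
  obtain ⟨w, hwU, hmw⟩ := hU y' hy'U u hu γ₃ h3 m hmside
  -- distances along the geodesics
  have da1 : dist y' (γ₁ s) = s := by
    rw [← h1.1, h1.2.2 0 h0L1 s hs, abs_of_nonpos (by linarith [hs.1]), neg_sub, sub_zero]
  have da2 : dist y (γ₁ s) = L1 - s := by
    rw [← h1.2.1, h1.2.2 L1 hLL1 s hs, abs_of_nonneg (by linarith [hs.2])]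
  have db1 : dist y (γ₂ r) = r := by
    rw [← h2.1, h2.2.2 0 h0L2 r hr, abs_of_nonpos (by linarith [hr.1]), neg_sub, sub_zero]
  have db2 : dist (γ₂ r) u = L2 - r := by
    rw [← h2.2.1, h2.2.2 r hr L2 hLL2, abs_of_nonpos (by linarith [hr.2]), neg_sub]
  have dm1 : dist y' m = t := by
    rw [hm, ← h3.1, h3.2.2 0 h0L3 t ht, abs_of_nonpos (by linarith [ht.1]), neg_sub, sub_zero]
  have dm2 : dist m u = L3 - t := by
    rw [hm, ← h3.2.1, h3.2.2 t ht L3 hLL3, abs_of_nonpos (by linarith [ht.2]), neg_sub]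
  -- linear arithmetic
  have hP : dist y y' ≤ Metric.infDist y U + ε := hy'd
  have hI : Metric.infDist y U ≤ dist y w := Metric.infDist_le_dist_of_mem hwU
  have tri1 : dist y w ≤ dist y (γ₂ r) + dist (γ₂ r) m + dist m w := dist_triangle4 _ _ _ _
  have tri2 : dist y w ≤ dist y (γ₁ s) + dist (γ₁ s) m + dist m w := dist_triangle4 _ _ _ _
  have tri3 : dist y' m ≤ dist y' (γ₁ s) + dist (γ₁ s) m := dist_triangle _ _ _
  have tri4 : dist m u ≤ dist m (γ₂ r) + dist (γ₂ r) u := dist_triangle _ _ _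
  have tri5 : dist y' u ≤ dist y' m + dist m u := dist_triangle _ _ _
  have hcomm1 : dist y y' = L1 := dist_comm y y'
  have hcomm2 : dist (γ₁ s) m = dist m (γ₁ s) := dist_comm _ _
  have hcomm3 : dist (γ₂ r) m = dist m (γ₂ r) := dist_comm _ _
  rw [hcomm1]
  linarith [dist_nonneg (x := y) (y := γ₁ s)]
end

section
/- Claim inside the proof of the Triangle lemma: Fix ε > 0, δ ≥ 0 and R ≥ 0. Let X be a δ-hyperbolic geodesic metric space and let U ⊆ X be a nonempty subset that is quasi-convex with constant R. Suppose y ∈ X, y' ∈ proj_U^ε(y), u ∈ U, and ε + 2δ + R < d(y',u). Let a be the point on a geodesic segment from y' to u with d(y',a) = ε + 2δ + R + ε', where 0 < ε' < d(y',u) − ε − 2δ − R. Then a does not lie in the closed δ-neighborhood of (the image of) any geodesic segment from y' to y. -/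
/-- **Claim inside the proof of the Triangle lemma**: the point `a` on a geodesic from
`y'` to `u` at distance `ε + 2δ + R + ε'` from `y'` does not lie in the closed
`δ`-neighborhood of any geodesic segment from `y'` to `y`. -/
theorem claim_far_from_side {X : Type*} [MetricSpace X] (ε δ R : ℝ)
    (hε : 0 < ε) (hδ : 0 ≤ δ) (hR : 0 ≤ R)
    (hgeo : GeodesicSpace X) (hhyp : DeltaHyperbolic X δ)
    (U : Set X) (hUne : U.Nonempty) (hU : QuasiConvexWith U R)
    (y y' u : X) (hy' : y' ∈ quasiProj U ε y) (hu : u ∈ U)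
    (hfar : ε + 2 * δ + R < dist y' u)
    (ε' : ℝ) (hε'0 : 0 < ε') (hε'1 : ε' < dist y' u - ε - 2 * δ - R)
    (γ : ℝ → X) (hγ : IsGeodesicSegment γ y' u)
    (a : X) (ha : a = γ (ε + 2 * δ + R + ε'))
    (σ : ℝ → X) (hσ : IsGeodesicSegment σ y' y) :
    ∀ p ∈ σ '' Set.Icc (0 : ℝ) (dist y' y), δ < dist a p := by
  rintro p ⟨s, hs, rfl⟩
  by_contra h
  push_neg at h
  obtain ⟨hy'U, hy'd⟩ := hy'
  set t := ε + 2 * δ + R + ε' with htdef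
  have ht0 : (0:ℝ) ≤ t := by linarith
  have htle : t ≤ dist y' u := by linarith
  have hdy'a : dist y' a = t := by
    have h1 := hγ.2.2 0 ⟨le_refl 0, dist_nonneg⟩ t ⟨ht0, htle⟩
    rw [hγ.1] at h1
    rw [ha, h1, abs_of_nonpos (by linarith), neg_sub, sub_zero]
  obtain ⟨w, hwU, hw⟩ := hU y' hy'U u hu γ hγ a ⟨t, ⟨ht0, htle⟩, ha.symm⟩
  have hinf : Metric.infDist y U ≤ dist y w := Metric.infDist_le_dist_of_mem hwU
  have hs1 : dist y' (σ s) = s := by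
    have h1 := hσ.2.2 0 ⟨le_refl 0, dist_nonneg⟩ s hs
    rw [hσ.1] at h1
    rw [h1, abs_of_nonpos (by linarith [hs.1]), neg_sub, sub_zero]
  have hs2 : dist (σ s) y = dist y' y - s := by
    have h1 := hσ.2.2 s hs (dist y' y) ⟨dist_nonneg, le_refl _⟩
    rw [hσ.2.1] at h1
    rw [h1, abs_of_nonpos (by linarith [hs.2]), neg_sub]
  have t1 : dist y w ≤ dist y (σ s) + dist (σ s) a + dist a w :=
    dist_triangle4 y (σ s) a w
  have t2 : dist y' a ≤ dist y' (σ s) + dist (σ s) a := dist_triangle _ _ _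
  have hcomm1 : dist y (σ s) = dist y' y - s := by rw [dist_comm]; exact hs2
  have hcomm2 : dist (σ s) a = dist a (σ s) := dist_comm _ _
  have hcomm3 : dist y y' = dist y' y := dist_comm _ _
  linarith
end

section
/- Quadrilateral lemma (Lemma 4.3): Fix ε > 0, δ ≥ 0 and R ≥ 0. Let X be a δ-hyperbolic geodesic metric space and let U ⊆ X be a nonempty subset that is quasi-convex with constant R. Suppose y, z ∈ X, y' ∈ proj_U^ε(y), z' ∈ proj_U^ε(z), and 2ε + 8δ + 2R < d(y',z'). Then d(y,y') + d(y',z') + d(z',z) ≤ d(y,z) + (4ε + 12δ + 4R). -/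
/-- Distance from the left endpoint along a geodesic. -/
lemma geo_dist_left {X : Type*} [MetricSpace X] {γ : ℝ → X} {u v : X}
    (hγ : IsGeodesicSegment γ u v) {s : ℝ} (hs : s ∈ Set.Icc (0 : ℝ) (dist u v)) :
    dist u (γ s) = s := by
  have h0 : (0 : ℝ) ∈ Set.Icc (0 : ℝ) (dist u v) := ⟨le_refl 0, dist_nonneg⟩
  have h := hγ.2.2 0 h0 s hs
  rw [hγ.1] at h
  rw [h, abs_of_nonpos (by linarith [hs.1])]
  ring

/-- Distance to the right endpoint along a geodesic. -/
lemma geo_dist_right {X : Type*} [MetricSpace X] {γ : ℝ → X} {u v : X}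
    (hγ : IsGeodesicSegment γ u v) {s : ℝ} (hs : s ∈ Set.Icc (0 : ℝ) (dist u v)) :
    dist (γ s) v = dist u v - s := by
  have hd : dist u v ∈ Set.Icc (0 : ℝ) (dist u v) := ⟨dist_nonneg, le_refl _⟩
  have h := hγ.2.2 s hs (dist u v) hd
  rw [hγ.2.1] at h
  rw [h, abs_of_nonpos (by linarith [hs.2])]
  ring

/-- **Quadrilateral lemma** (Lemma 4.3). -/
theorem quadrilateral_lemma {X : Type*} [MetricSpace X] (ε δ R : ℝ)
    (hε : 0 < ε) (hδ : 0 ≤ δ) (hR : 0 ≤ R)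
    (hgeo : GeodesicSpace X) (hhyp : DeltaHyperbolic X δ)
    (U : Set X) (hUne : U.Nonempty) (hU : QuasiConvexWith U R)
    (y z y' z' : X) (hy' : y' ∈ quasiProj U ε y) (hz' : z' ∈ quasiProj U ε z)
    (hfar : 2 * ε + 8 * δ + 2 * R < dist y' z') :
    dist y y' + dist y' z' + dist z' z ≤ dist y z + (4 * ε + 12 * δ + 4 * R) := by
  obtain ⟨hy'U, hy'd⟩ := hy'
  obtain ⟨hz'U, hz'd⟩ := hz'
  obtain ⟨α, hα⟩ := hgeo y' z'
  obtain ⟨β, hβ⟩ := hgeo y' y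
  obtain ⟨g, hg⟩ := hgeo y z'
  obtain ⟨g', hg'⟩ := hgeo y' z
  obtain ⟨γ, hγ⟩ := hgeo y z
  obtain ⟨h, hh⟩ := hgeo z z'
  -- Main estimate, for every small enough η > 0.
  have main : ∀ η : ℝ, 0 < η → 2 * η ≤ dist y' z' - (2 * ε + 8 * δ + 2 * R) →
      dist y y' + dist y' z' + dist z' z ≤ dist y z + (4 * ε + 12 * δ + 4 * R) + 2 * η := by
    intro η hη hη2
    set a : ℝ := ε + 2 * δ + R + η with ha
    have ha0 : 0 < a := by positivity
    have haD : 2 * a ≤ dist y' z' := by simp only [ha]; linarith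
    have hpmem : a ∈ Set.Icc (0 : ℝ) (dist y' z') := ⟨le_of_lt ha0, by linarith⟩
    have hqmem : dist y' z' - a ∈ Set.Icc (0 : ℝ) (dist y' z') := ⟨by linarith, by linarith⟩
    -- nearby points of U, from quasi-convexity
    obtain ⟨up, hupU, hup⟩ := hU y' hy'U z' hz'U α hα (α a) ⟨a, hpmem, rfl⟩
    obtain ⟨uq, huqU, huq⟩ := hU y' hy'U z' hz'U α hα (α (dist y' z' - a))
      ⟨dist y' z' - a, hqmem, rfl⟩
    -- distances of p, q from the endpoints of α
    have hpy' : dist y' (α a) = a := geo_dist_left hα hpmem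
    have hpz' : dist (α a) z' = dist y' z' - a := geo_dist_right hα hpmem
    have hqy' : dist y' (α (dist y' z' - a)) = dist y' z' - a := geo_dist_left hα hqmem
    have hqz' : dist (α (dist y' z' - a)) z' = a := by
      have := geo_dist_right hα hqmem; linarith [this]
    -- projection inequalities
    have hyU : ∀ u ∈ U, dist y y' ≤ dist y u + ε := fun u hu => by
      have := Metric.infDist_le_dist_of_mem (x := y) hu
      linarith
    have hzU : ∀ u ∈ U, dist z z' ≤ dist z u + ε := fun u hu => by
      have := Metric.infDist_le_dist_of_mem (x := z) hu
      linarith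
    -- p = α a is 2δ-close to the geodesic γ from y to z
    have hp_near : ∃ s ∈ Set.Icc (0 : ℝ) (dist y z), dist (α a) (γ s) ≤ 2 * δ := by
      obtain ⟨q₁, hq₁mem, hq₁⟩ := hhyp y' y z' β g α hβ hg hα (α a) ⟨a, hpmem, rfl⟩
      rcases hq₁mem with ⟨s₁, hs₁, rfl⟩ | ⟨s₃, hs₃, rfl⟩
      · -- q₁ on [y', y] : contradiction
        exfalso
        have h1 : dist y (β s₁) = dist y' y - s₁ := by
          have := geo_dist_right hβ hs₁; rw [dist_comm]; exact this
        have h2 : dist y' (β s₁) = s₁ := geo_dist_left hβ hs₁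
        have h3 : dist y y' ≤ dist y (β s₁) + dist (β s₁) (α a) + dist (α a) up + ε := by
          have := hyU up hupU
          have htri : dist y up ≤ dist y (β s₁) + dist (β s₁) (α a) + dist (α a) up := by
            calc dist y up ≤ dist y (α a) + dist (α a) up := dist_triangle _ _ _
              _ ≤ (dist y (β s₁) + dist (β s₁) (α a)) + dist (α a) up := by
                  linarith [dist_triangle y (β s₁) (α a)]
          linarith
        rw [h1, dist_comm y' y] at h3
        have hs₁small : s₁ ≤ ε + δ + R := by
          rw [dist_comm (β s₁) (α a)] at h3
          linarith
        have : a ≤ dist (α a) (β s₁) + s₁ := by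
          have := dist_triangle y' (β s₁) (α a)
          rw [h2, dist_comm (β s₁) (α a)] at this
          linarith [hpy', dist_comm y' (α a) ▸ this]
        have hfin : a ≤ δ + s₁ := by
          have h4 := dist_triangle (α a) (β s₁) y'
          rw [dist_comm (β s₁) y', h2] at h4
          have : dist (α a) y' = a := by rw [dist_comm]; exact hpy'
          linarith
        simp only [ha] at hfin
        linarith
      · -- q₁ on the diagonal [y, z']
        obtain ⟨w, hwmem, hw⟩ := hhyp y z z' γ h g hγ hh hg (g s₃) ⟨s₃, hs₃, rfl⟩
        rcases hwmem with ⟨s, hs, rfl⟩ | ⟨s₂, hs₂, rfl⟩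
        · exact ⟨s, hs, by
            calc dist (α a) (γ s) ≤ dist (α a) (g s₃) + dist (g s₃) (γ s) :=
                dist_triangle _ _ _
              _ ≤ 2 * δ := by linarith⟩
        · -- w on [z, z'] : contradiction
          exfalso
          have h1 : dist z (h s₂) = s₂ := geo_dist_left hh hs₂
          have h2 : dist (h s₂) z' = dist z z' - s₂ := geo_dist_right hh hs₂
          have hpw : dist (α a) (h s₂) ≤ 2 * δ := by
            calc dist (α a) (h s₂) ≤ dist (α a) (g s₃) + dist (g s₃) (h s₂) :=
                dist_triangle _ _ _
              _ ≤ 2 * δ := by linarith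
          have h3 : dist z z' ≤ s₂ + 2 * δ + R + ε := by
            have := hzU up hupU
            have htri : dist z up ≤ dist z (h s₂) + dist (h s₂) (α a) + dist (α a) up := by
              calc dist z up ≤ dist z (α a) + dist (α a) up := dist_triangle _ _ _
                _ ≤ (dist z (h s₂) + dist (h s₂) (α a)) + dist (α a) up := by
                    linarith [dist_triangle z (h s₂) (α a)]
            rw [h1, dist_comm (h s₂) (α a)] at htri
            linarith
          have h4 : dist (α a) z' ≤ ε + 4 * δ + R := by
            have := dist_triangle (α a) (h s₂) z'
            linarith
          rw [hpz'] at h4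
          simp only [ha] at h4
          linarith
    -- q = α (dist y' z' - a) is 2δ-close to γ as well
    have hq_near : ∃ t ∈ Set.Icc (0 : ℝ) (dist y z),
        dist (α (dist y' z' - a)) (γ t) ≤ 2 * δ := by
      obtain ⟨q₁, hq₁mem, hq₁⟩ := hhyp y' z z' g' h α hg' hh hα (α (dist y' z' - a))
        ⟨dist y' z' - a, hqmem, rfl⟩
      rcases hq₁mem with ⟨s₃, hs₃, rfl⟩ | ⟨s₂, hs₂, rfl⟩
      · -- q₁ on the diagonal [y', z]
        obtain ⟨w, hwmem, hw⟩ := hhyp y' y z β γ g' hβ hγ hg' (g' s₃) ⟨s₃, hs₃, rfl⟩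
        rcases hwmem with ⟨s₁, hs₁, rfl⟩ | ⟨t, ht, rfl⟩
        · -- w on [y', y] : contradiction
          exfalso
          have h1 : dist y (β s₁) = dist y' y - s₁ := by
            have := geo_dist_right hβ hs₁; rw [dist_comm]; exact this
          have h2 : dist y' (β s₁) = s₁ := geo_dist_left hβ hs₁
          have hqw : dist (α (dist y' z' - a)) (β s₁) ≤ 2 * δ := by
            calc dist (α (dist y' z' - a)) (β s₁)
                ≤ dist (α (dist y' z' - a)) (g' s₃) + dist (g' s₃) (β s₁) :=
                dist_triangle _ _ _
              _ ≤ 2 * δ := by linarith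
          have h3 : dist y y' ≤ (dist y' y - s₁) + 2 * δ + R + ε := by
            have := hyU uq huqU
            have htri : dist y uq ≤ dist y (β s₁) + dist (β s₁) (α (dist y' z' - a))
                + dist (α (dist y' z' - a)) uq := by
              calc dist y uq ≤ dist y (α (dist y' z' - a)) + dist (α (dist y' z' - a)) uq :=
                  dist_triangle _ _ _
                _ ≤ (dist y (β s₁) + dist (β s₁) (α (dist y' z' - a)))
                    + dist (α (dist y' z' - a)) uq := by
                    linarith [dist_triangle y (β s₁) (α (dist y' z' - a))]
            rw [h1, dist_comm (β s₁) (α (dist y' z' - a))] at htri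
            linarith
          rw [dist_comm y' y] at h3
          have hs₁small : s₁ ≤ ε + 2 * δ + R := by linarith
          have h4 : dist y' z' - a ≤ ε + 4 * δ + R := by
            have := dist_triangle y' (β s₁) (α (dist y' z' - a))
            rw [h2, dist_comm (β s₁) (α (dist y' z' - a))] at this
            rw [hqy'] at this
            linarith
          simp only [ha] at h4
          linarith
        · exact ⟨t, ht, by
            calc dist (α (dist y' z' - a)) (γ t)
                ≤ dist (α (dist y' z' - a)) (g' s₃) + dist (g' s₃) (γ t) :=
                dist_triangle _ _ _
              _ ≤ 2 * δ := by linarith⟩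
      · -- q₁ on [z, z'] : contradiction
        exfalso
        have h1 : dist z (h s₂) = s₂ := geo_dist_left hh hs₂
        have h2 : dist (h s₂) z' = dist z z' - s₂ := geo_dist_right hh hs₂
        have h3 : dist z z' ≤ s₂ + δ + R + ε := by
          have := hzU uq huqU
          have htri : dist z uq ≤ dist z (h s₂) + dist (h s₂) (α (dist y' z' - a))
              + dist (α (dist y' z' - a)) uq := by
            calc dist z uq ≤ dist z (α (dist y' z' - a)) + dist (α (dist y' z' - a)) uq :=
                dist_triangle _ _ _
              _ ≤ (dist z (h s₂) + dist (h s₂) (α (dist y' z' - a)))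
                  + dist (α (dist y' z' - a)) uq := by
                  linarith [dist_triangle z (h s₂) (α (dist y' z' - a))]
          rw [h1, dist_comm (h s₂) (α (dist y' z' - a))] at htri
          linarith
        have h4 : a ≤ ε + 2 * δ + R := by
          have := dist_triangle (α (dist y' z' - a)) (h s₂) z'
          rw [hqz'] at this
          linarith
        simp only [ha] at h4
        linarith
    -- final arithmetic
    obtain ⟨s, hs, hps⟩ := hp_near
    obtain ⟨t, ht, hqt⟩ := hq_near
    have hys : dist y (γ s) = s := geo_dist_left hγ hs
    have hyt : dist y (γ t) = t := geo_dist_left hγ ht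
    have hsz : dist (γ s) z = dist y z - s := geo_dist_right hγ hs
    have htz : dist (γ t) z = dist y z - t := geo_dist_right hγ ht
    have hst : dist (γ s) (γ t) = |s - t| := hγ.2.2 s hs t ht
    -- endpoint estimates
    have hA1 : dist y y' ≤ s + (ε + 2 * δ + R) := by
      have := hyU up hupU
      have h1 : dist y up ≤ dist y (γ s) + dist (γ s) (α a) + dist (α a) up := by
        calc dist y up ≤ dist y (α a) + dist (α a) up := dist_triangle _ _ _
          _ ≤ _ := by linarith [dist_triangle y (γ s) (α a)]
      rw [hys, dist_comm (γ s) (α a)] at h1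
      linarith
    have hA2 : dist y y' ≤ t + (ε + 2 * δ + R) := by
      have := hyU uq huqU
      have h1 : dist y uq ≤ dist y (γ t) + dist (γ t) (α (dist y' z' - a))
          + dist (α (dist y' z' - a)) uq := by
        calc dist y uq ≤ dist y (α (dist y' z' - a)) + dist (α (dist y' z' - a)) uq :=
            dist_triangle _ _ _
          _ ≤ _ := by linarith [dist_triangle y (γ t) (α (dist y' z' - a))]
      rw [hyt, dist_comm (γ t) (α (dist y' z' - a))] at h1
      linarith
    have hB1 : dist z' z ≤ (dist y z - s) + (ε + 2 * δ + R) := by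
      have := hzU up hupU
      have h1 : dist z up ≤ dist z (γ s) + dist (γ s) (α a) + dist (α a) up := by
        calc dist z up ≤ dist z (α a) + dist (α a) up := dist_triangle _ _ _
          _ ≤ _ := by linarith [dist_triangle z (γ s) (α a)]
      rw [dist_comm z (γ s), hsz, dist_comm (γ s) (α a)] at h1
      rw [dist_comm z' z]
      linarith
    have hB2 : dist z' z ≤ (dist y z - t) + (ε + 2 * δ + R) := by
      have := hzU uq huqU
      have h1 : dist z uq ≤ dist z (γ t) + dist (γ t) (α (dist y' z' - a))
          + dist (α (dist y' z' - a)) uq := by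
        calc dist z uq ≤ dist z (α (dist y' z' - a)) + dist (α (dist y' z' - a)) uq :=
            dist_triangle _ _ _
          _ ≤ _ := by linarith [dist_triangle z (γ t) (α (dist y' z' - a))]
      rw [dist_comm z (γ t), htz, dist_comm (γ t) (α (dist y' z' - a))] at h1
      rw [dist_comm z' z]
      linarith
    -- middle estimate
    have hpq : dist (α a) (α (dist y' z' - a)) = dist y' z' - 2 * a := by
      have := hα.2.2 a hpmem (dist y' z' - a) hqmem
      rw [this, abs_of_nonpos (by linarith)]
      ring
    have hmid : dist y' z' ≤ 2 * a + 4 * δ + |s - t| := by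
      have h1 : dist (α a) (α (dist y' z' - a)) ≤
          dist (α a) (γ s) + dist (γ s) (γ t) + dist (γ t) (α (dist y' z' - a)) := by
        calc dist (α a) (α (dist y' z' - a))
            ≤ dist (α a) (γ t) + dist (γ t) (α (dist y' z' - a)) := dist_triangle _ _ _
          _ ≤ _ := by linarith [dist_triangle (α a) (γ s) (γ t)]
      rw [hpq, hst] at h1
      rw [dist_comm (γ t) (α (dist y' z' - a))] at h1
      linarith
    rcases le_total s t with hcase | hcase
    · rw [abs_of_nonpos (by linarith)] at hmid
      simp only [ha] at hmid ⊢
      linarith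
    · rw [abs_of_nonneg (by linarith)] at hmid
      simp only [ha] at hmid ⊢
      linarith
  -- conclude by letting η → 0
  by_contra hcon
  push_neg at hcon
  set L := dist y y' + dist y' z' + dist z' z with hL
  set B := dist y z + (4 * ε + 12 * δ + 4 * R) with hB
  have hgap : 0 < dist y' z' - (2 * ε + 8 * δ + 2 * R) := by linarith
  set η : ℝ := min ((dist y' z' - (2 * ε + 8 * δ + 2 * R)) / 2) ((L - B) / 4) with hηdef
  have hη0 : 0 < η := lt_min (by linarith) (by linarith)
  have hη1 : 2 * η ≤ dist y' z' - (2 * ε + 8 * δ + 2 * R) := by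
    have := min_le_left ((dist y' z' - (2 * ε + 8 * δ + 2 * R)) / 2) ((L - B) / 4)
    rw [← hηdef] at this
    linarith
  have hη2 : 2 * η ≤ (L - B) / 2 := by
    have := min_le_right ((dist y' z' - (2 * ε + 8 * δ + 2 * R)) / 2) ((L - B) / 4)
    rw [← hηdef] at this
    linarith
  have := main η hη0 hη1
  linarith
end

section
/- Claim 5.2 (the invariant axis is a quasi-geodesic): Let X be a geodesic metric space, h an isometry of X with average displacement α(h) > 0, and x ∈ X. Set α₁ = d(x,h(x)) and let M₀ ≥ 3 be an integer such that d(x,hᵐ(x))/m − α(h) < α(h)/2 for every integer m with m + 1 ≥ M₀. Let L₁ : ℝ → X be an invariant axis for h (parameterized by arc length). Then L₁ is a quasi-geodesic with multiplicative constant λ₁ = 2α₁/α(h) and additive constant ε₁ = M₀·α₁; that is, for all a ≤ b in ℝ, (α(h)/(2α₁))·(b − a) − M₀·α₁ ≤ d(L₁(a),L₁(b)) ≤ b − a. -/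
/-- The average displacement of the isometry `h`, computed at the point `x`:
`inf_{n ≥ 1} dist x (hⁿ x) / n` (this equals `lim_n dist x (hⁿ x) / n` and is
independent of `x`). -/
noncomputable def avgDisp {X : Type*} [MetricSpace X] (h : X ≃ᵢ X) (x : X) : ℝ :=
  ⨅ n : ℕ+, dist x ((⇑h)^[(n : ℕ)] x) / (n : ℝ)

/-- `L` is an invariant axis for `h` through the orbit of `x`, built from the geodesic
segment `γ` from `x` to `h x`:  `L t = hᵏ (γ (t - k·d₁))` for `t ∈ [k·d₁, (k+1)·d₁]`,
where `d₁ = dist x (h x)`. -/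
def IsInvariantAxis {X : Type*} [MetricSpace X] (h : X ≃ᵢ X) (x : X) (γ : ℝ → X)
    (L : ℝ → X) : Prop :=
  IsGeodesicSegment γ x (h x) ∧
    ∀ k : ℤ, ∀ t ∈ Set.Icc ((k : ℝ) * dist x (h x)) (((k : ℝ) + 1) * dist x (h x)),
      L t = (h ^ k) (γ (t - (k : ℝ) * dist x (h x)))

private lemma isomEquiv_pow_apply {X : Type*} [MetricSpace X] (h : X ≃ᵢ X) (n : ℕ) (x : X) :
    (h ^ n) x = (⇑h)^[n] x := by
  induction n generalizing x with
  | zero => simp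
  | succ n ih => simp [pow_succ, Function.iterate_succ_apply, ih]

private lemma avgDisp_le {X : Type*} [MetricSpace X] (h : X ≃ᵢ X) (x : X) (n : ℕ+) :
    avgDisp h x ≤ dist x ((⇑h)^[(n : ℕ)] x) / (n : ℝ) := by
  apply ciInf_le
  refine ⟨0, ?_⟩
  rintro y ⟨m, rfl⟩
  positivity

set_option maxHeartbeats 1600000 in
/-- **Claim 5.2**: the invariant axis `L₁` is a quasi-geodesic with multiplicative
constant `λ₁ = 2α₁/α(h)` and additive constant `ε₁ = M₀·α₁`, where `α₁ = dist x (h x)`. -/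
theorem invariant_axis_quasigeodesic {X : Type*} [MetricSpace X]
    (hgeo : GeodesicSpace X) (h : X ≃ᵢ X) (x : X)
    (hα : 0 < avgDisp h x)
    (M₀ : ℕ) (hM₀ : 3 ≤ M₀)
    (hM : ∀ m : ℕ, M₀ ≤ m + 1 →
      dist x ((⇑h)^[m] x) / (m : ℝ) - avgDisp h x < avgDisp h x / 2)
    (γ L : ℝ → X) (hL : IsInvariantAxis h x γ L) :
    ∀ a b : ℝ, a ≤ b →
      avgDisp h x / (2 * dist x (h x)) * (b - a) - (M₀ : ℝ) * dist x (h x)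
          ≤ dist (L a) (L b) ∧
        dist (L a) (L b) ≤ b - a := by
  obtain ⟨⟨hγ0, hγd, hγiso⟩, hLseg⟩ := hL
  set α := avgDisp h x with hαdef
  set d := dist x (h x) with hddef
  -- α ≤ d
  have hαled : α ≤ d := by
    have := avgDisp_le h x 1
    simpa using this
  have hd : 0 < d := lt_of_lt_of_le hα hαled
  -- within one fundamental segment, L is isometric
  have segA : ∀ (k : ℤ), ∀ s ∈ Set.Icc ((k : ℝ) * d) (((k : ℝ) + 1) * d),
      ∀ t ∈ Set.Icc ((k : ℝ) * d) (((k : ℝ) + 1) * d), dist (L s) (L t) = |s - t| := by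
    intro k s hs t ht
    rw [hLseg k s hs, hLseg k t ht, (h ^ k).dist_eq]
    have h1 : s - (k : ℝ) * d ∈ Set.Icc (0 : ℝ) d := by
      constructor
      · linarith [hs.1]
      · have := hs.2; nlinarith
    have h2 : t - (k : ℝ) * d ∈ Set.Icc (0 : ℝ) d := by
      constructor
      · linarith [ht.1]
      · have := ht.2; nlinarith
    rw [hγiso _ h1 _ h2]
    ring_nf
  have memk : ∀ k : ℤ, ((k : ℝ) * d) ∈ Set.Icc ((k : ℝ) * d) (((k : ℝ) + 1) * d) := by
    intro k
    exact ⟨le_refl _, by nlinarith⟩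
  -- L at multiples of d
  have segB : ∀ k : ℤ, L ((k : ℝ) * d) = (h ^ k) x := by
    intro k
    rw [hLseg k _ (memk k)]
    simp [hγ0]
  -- Lipschitz estimate
  have lip : ∀ n : ℕ, ∀ a b : ℝ, a ≤ b → b ≤ ((⌊a / d⌋ : ℝ) + n + 1) * d →
      dist (L a) (L b) ≤ b - a := by
    intro n
    induction n with
    | zero =>
      intro a b hab hb
      have hka : (⌊a / d⌋ : ℝ) * d ≤ a := by
        rw [← le_div_iff₀ hd] at *
        exact Int.floor_le _
      have : dist (L a) (L b) = |a - b| := by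
        apply segA ⌊a / d⌋
        · exact ⟨hka, by push_cast at hb ⊢; linarith⟩
        · exact ⟨le_trans hka hab, by push_cast at hb ⊢; linarith⟩
      rw [this, abs_sub_comm, abs_of_nonneg (by linarith)]
    | succ n ih =>
      intro a b hab hb
      have hka : (⌊a / d⌋ : ℝ) * d ≤ a := by
        rw [← le_div_iff₀ hd]
        exact Int.floor_le _
      have hka2 : a ≤ ((⌊a / d⌋ : ℝ) + 1) * d := by
        rw [← div_le_iff₀ hd]
        push_cast
        linarith [Int.lt_floor_add_one (a / d)]
      by_cases hc : b ≤ ((⌊a / d⌋ : ℝ) + 1) * d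
      · have : dist (L a) (L b) = |a - b| := by
          apply segA ⌊a / d⌋
          · exact ⟨hka, hka2⟩
          · exact ⟨le_trans hka hab, hc⟩
        rw [this, abs_sub_comm, abs_of_nonneg (by linarith)]
      · push_neg at hc
        set c : ℝ := ((⌊a / d⌋ : ℝ) + 1) * d with hcdef
        have hfloorc : ⌊c / d⌋ = ⌊a / d⌋ + 1 := by
          rw [hcdef, mul_div_assoc, div_self hd.ne', mul_one]
          have : ((⌊a / d⌋ : ℝ) + 1) = ((⌊a / d⌋ + 1 : ℤ) : ℝ) := by push_cast; ring
          rw [this, Int.floor_intCast]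
        have h1 : dist (L a) (L c) = c - a := by
          have := segA ⌊a / d⌋ a ⟨hka, hka2⟩ c ⟨by nlinarith, le_refl _⟩
          rw [this, abs_sub_comm, abs_of_nonneg (by linarith)]
        have h2 : dist (L c) (L b) ≤ b - c := by
          apply ih c b hc.le
          rw [hfloorc]
          push_cast at hb ⊢
          linarith
        calc dist (L a) (L b) ≤ dist (L a) (L c) + dist (L c) (L b) := dist_triangle _ _ _
          _ ≤ b - a := by rw [h1]; linarith
  -- orbit distance lower bound
  have orbit : ∀ k l : ℤ, k ≤ l →
      ((l - k : ℤ) : ℝ) * α ≤ dist (L ((k : ℝ) * d)) (L ((l : ℝ) * d)) := by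
    intro k l hkl
    rw [segB k, segB l]
    have key : (h ^ l) x = (h ^ k) ((h ^ (l - k)) x) := by
      have : (h ^ k) * (h ^ (l - k)) = h ^ l := by
        rw [← zpow_add]; ring_nf
      rw [← this]; rfl
    rw [key, (h ^ k).dist_eq]
    set n : ℕ := (l - k).toNat with hndef
    have hcast : ((n : ℤ) : ℝ) = ((l - k : ℤ) : ℝ) := by
      rw [hndef, Int.toNat_of_nonneg (by omega)]
    have hpow : (h ^ (l - k)) x = (⇑h)^[n] x := by
      rw [show (l - k) = (n : ℤ) by omega, zpow_natCast, isomEquiv_pow_apply]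
    rw [hpow]
    rcases Nat.eq_zero_or_pos n with hn0 | hn0
    · simp [hn0] at hcast ⊢
      rw [← hcast]
      simp
    · have := avgDisp_le h x ⟨n, hn0⟩
      simp only [PNat.mk_coe] at this
      rw [le_div_iff₀ (by exact_mod_cast hn0)] at this
      calc ((l - k : ℤ) : ℝ) * α = (n : ℝ) * α := by rw [← hcast]; norm_num
        _ ≤ _ := by linarith [mul_comm (n : ℝ) α ▸ this]
  -- main proof
  intro a b hab
  have hfa : (⌊a / d⌋ : ℝ) * d ≤ a := by
    rw [← le_div_iff₀ hd]; exact Int.floor_le _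
  have hfa2 : a ≤ ((⌊a / d⌋ : ℝ) + 1) * d := by
    rw [← div_le_iff₀ hd]; push_cast; linarith [Int.lt_floor_add_one (a / d)]
  have hfb : (⌊b / d⌋ : ℝ) * d ≤ b := by
    rw [← le_div_iff₀ hd]; exact Int.floor_le _
  have hfb2 : b ≤ ((⌊b / d⌋ : ℝ) + 1) * d := by
    rw [← div_le_iff₀ hd]; push_cast; linarith [Int.lt_floor_add_one (b / d)]
  have hkl : ⌊a / d⌋ ≤ ⌊b / d⌋ := Int.floor_le_floor (by gcongr)
  constructor
  · -- lower bound
    set k := ⌊a / d⌋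
    set l := ⌊b / d⌋
    by_cases hckl : k = l
    · -- same segment
      have heq : dist (L a) (L b) = b - a := by
        have := segA k a ⟨hfa, hfa2⟩ b ⟨by rw [hckl]; exact hfb, by rw [hckl]; exact hfb2⟩
        rw [this, abs_sub_comm, abs_of_nonneg (by linarith)]
      rw [heq]
      have h1 : α / (2 * d) ≤ 1 := by
        rw [div_le_one (by positivity)]; linarith
      have h2 : α / (2 * d) * (b - a) ≤ b - a := by
        nlinarith [div_nonneg hα.le (by positivity : (0:ℝ) ≤ 2 * d)]
      have h3 : (0 : ℝ) ≤ (M₀ : ℝ) * d := by positivity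
      linarith
    · -- k < l
      have hkl' : k < l := lt_of_le_of_ne hkl hckl
      have hN1 : (1 : ℝ) ≤ ((l - k : ℤ) : ℝ) := by exact_mod_cast (by omega : (1:ℤ) ≤ l - k)
      set N : ℝ := ((l - k : ℤ) : ℝ) with hNdef
      have hNlk : N = (l : ℝ) - (k : ℝ) := by push_cast [hNdef]; ring
      have d1 : dist (L ((k : ℝ) * d)) (L a) = a - (k : ℝ) * d := by
        rw [segA k _ (memk k) a ⟨hfa, hfa2⟩, abs_of_nonpos (by linarith), neg_sub]
      have d2 : dist (L b) (L ((l : ℝ) * d)) = b - (l : ℝ) * d := by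
        rw [segA l b ⟨hfb, hfb2⟩ _ (memk l), abs_of_nonneg (by linarith)]
      have tri : dist (L ((k : ℝ) * d)) (L ((l : ℝ) * d)) ≤
          dist (L ((k : ℝ) * d)) (L a) + dist (L a) (L b) + dist (L b) (L ((l : ℝ) * d)) :=
        dist_triangle4 _ _ _ _
      have horb := orbit k l hkl
      -- bounds on pieces
      have exk : ((k : ℝ) + 1) * d = (k : ℝ) * d + d := by ring
      have exl : ((l : ℝ) + 1) * d = (l : ℝ) * d + d := by ring
      have s1 : a - (k : ℝ) * d ≤ d := by linarith
      have s2 : b - (l : ℝ) * d ≤ d := by linarith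
      have sba : b - a ≤ (N + 1) * d := by rw [hNlk]; nlinarith
      -- α/(2d)(b-a) ≤ α(N+1)/2
      have e1 : α / (2 * d) * ((N + 1) * d) = α * (N + 1) / 2 := by
        field_simp
      have key : α / (2 * d) * (b - a) ≤ α * (N + 1) / 2 := by
        rw [← e1]
        exact mul_le_mul_of_nonneg_left sba (by positivity)
      have h2 : α * (N + 1) / 2 ≤ N * α := by
        nlinarith [mul_nonneg hα.le (by linarith : (0:ℝ) ≤ N - 1)]
      have hm : 3 * d ≤ (M₀ : ℝ) * d := by
        have : (3 : ℝ) ≤ (M₀ : ℝ) := by exact_mod_cast hM₀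
        nlinarith
      linarith
  · -- upper bound: find n with b ≤ (⌊a/d⌋ + n + 1) d
    obtain ⟨n, hn⟩ : ∃ n : ℕ, b ≤ ((⌊a / d⌋ : ℝ) + n + 1) * d := by
      obtain ⟨n, hn⟩ := exists_nat_ge ((b - (⌊a / d⌋ : ℝ) * d) / d)
      refine ⟨n, ?_⟩
      rw [div_le_iff₀ hd] at hn
      nlinarith
    exact lip n a b hab hn
end

section
/- Claim 5.4 (no folding): Let X be a metric space, h an isometry of X with average displacement α(h) > 0, and x₀ ∈ X; write xⱼ = hʲ(x₀). Let R > 0, let n, k be positive integers with n > 3R/α(h), set m = kn, and let γ : [0,D] → X be a geodesic with γ(0) = x₀, γ(D) = xₘ, and D = d(x₀,xₘ). Suppose that for each i ∈ {0,1,…,k} there is a point zᵢ = γ(tᵢ) with d(x_{ni}, zᵢ) ≤ R, where t₀ = 0 and t_k = D. Then the points z₀, z₁, …, z_k are distinct and are encountered in order of their indices when traveling along γ from x₀ to xₘ; that is, t₀ < t₁ < ⋯ < t_k. -/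
/-- **Claim 5.4 (no folding)**: if `n > 3R/α(h)`, then when traveling from
`z₀ = x₀` to `z_k = x_m` along the geodesic `γ`, the points `zᵢ = γ(tᵢ)`
(with `d(x_{ni}, zᵢ) ≤ R`) are distinct and encountered in order of their indices. -/
theorem no_folding {X : Type*} [MetricSpace X]
    (h : X ≃ᵢ X) (x₀ : X) (hα : 0 < avgDisp h x₀)
    (R : ℝ) (hR : 0 < R)
    (n k : ℕ) (hn : 0 < n) (hk : 0 < k)
    (hnR : 3 * R / avgDisp h x₀ < (n : ℝ))
    (D : ℝ) (hD : D = dist x₀ ((⇑h)^[k * n] x₀))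
    (γ : ℝ → X) (hγ : IsGeodesicSegment γ x₀ ((⇑h)^[k * n] x₀))
    (t : ℕ → ℝ) (ht0 : t 0 = 0) (htk : t k = D)
    (htmem : ∀ i ≤ k, t i ∈ Set.Icc 0 D)
    (hz : ∀ i ≤ k, dist ((⇑h)^[n * i] x₀) (γ (t i)) ≤ R) :
    ∀ i j, i < j → j ≤ k → t i < t j := by
  set α := avgDisp h x₀ with hαdef
  have hbdd : BddBelow (Set.range fun m : ℕ+ => dist x₀ ((⇑h)^[(m : ℕ)] x₀) / (m : ℝ)) := by
    refine ⟨0, ?_⟩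
    rintro y ⟨m, rfl⟩
    positivity
  have hb : ∀ p : ℕ, 0 < p → (p : ℝ) * α ≤ dist x₀ ((⇑h)^[p] x₀) := by
    intro p hp
    have h1 : α ≤ dist x₀ ((⇑h)^[p] x₀) / p := by
      have h2 := ciInf_le hbdd (⟨p, hp⟩ : ℕ+)
      rw [hαdef]
      unfold avgDisp
      simpa using h2
    have hp' : (0 : ℝ) < p := by exact_mod_cast hp
    have := (le_div_iff₀ hp').mp h1
    linarith [this]
  have h3R : 3 * R < (n : ℝ) * α := by
    have := (div_lt_iff₀ hα).mp hnR
    linarith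
  have hIso : ∀ a : ℕ, Isometry ((⇑h)^[a]) := by
    intro a
    induction a with
    | zero => simpa using isometry_id
    | succ a ih =>
      rw [Function.iterate_succ']
      exact h.isometry.comp ih
  have horb : ∀ a b : ℕ, a ≤ b →
      dist ((⇑h)^[n * a] x₀) ((⇑h)^[n * b] x₀) = dist x₀ ((⇑h)^[n * (b - a)] x₀) := by
    intro a b hab
    have h1 : n * a + n * (b - a) = n * b := by
      rw [← Nat.mul_add]
      congr 1
      omega
    rw [← h1, Function.iterate_add_apply]
    exact (hIso (n * a)).dist_eq _ _
  obtain ⟨hγ0, hγD, hγiso⟩ := hγ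
  have hdz : ∀ a, a ≤ k → ∀ b, b ≤ k → dist (γ (t a)) (γ (t b)) = |t a - t b| := by
    intro a ha b hb2
    exact hγiso _ (by rw [← hD]; exact htmem a ha) _ (by rw [← hD]; exact htmem b hb2)
  have key : ∀ a b : ℕ, a < b → b ≤ k →
      dist x₀ ((⇑h)^[n * (b - a)] x₀) - 2 * R ≤ |t a - t b| ∧
      |t a - t b| ≤ dist x₀ ((⇑h)^[n * (b - a)] x₀) + 2 * R := by
    intro a b hab hbk
    have hak : a ≤ k := le_of_lt (lt_of_lt_of_le hab hbk)
    have hza := hz a hak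
    have hzb := hz b hbk
    have hD2 := horb a b hab.le
    have htri : dist ((⇑h)^[n * a] x₀) ((⇑h)^[n * b] x₀)
        ≤ dist ((⇑h)^[n * a] x₀) (γ (t a)) + dist (γ (t a)) (γ (t b))
          + dist (γ (t b)) ((⇑h)^[n * b] x₀) := dist_triangle4 _ _ _ _
    have htri2 : dist (γ (t a)) (γ (t b))
        ≤ dist (γ (t a)) ((⇑h)^[n * a] x₀) + dist ((⇑h)^[n * a] x₀) ((⇑h)^[n * b] x₀)
          + dist ((⇑h)^[n * b] x₀) (γ (t b)) := dist_triangle4 _ _ _ _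
    rw [hdz a hak b hbk] at htri htri2
    rw [hD2] at htri htri2
    have e1 : dist (γ (t a)) ((⇑h)^[n * a] x₀) = dist ((⇑h)^[n * a] x₀) (γ (t a)) :=
      dist_comm _ _
    have e2 : dist (γ (t b)) ((⇑h)^[n * b] x₀) = dist ((⇑h)^[n * b] x₀) (γ (t b)) :=
      dist_comm _ _
    constructor
    · linarith [htri, hza, hzb, e2]
    · linarith [htri2, hza, hzb, e1, e2]
  have hcons : ∀ i, i + 1 ≤ k → t i < t (i + 1) := by
    intro i
    induction i with
    | zero =>
      intro h1
      have k01 := key 0 1 (by omega) h1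
      rw [show 1 - 0 = 1 from rfl, Nat.mul_one] at k01
      have hB1 := hb n hn
      have ht1 : 0 ≤ t 1 := (htmem 1 h1).1
      have habs : |t 0 - t 1| = t 1 := by
        rw [ht0]
        rw [abs_of_nonpos (by linarith)]
        ring
      rw [habs] at k01
      rw [ht0]
      linarith [k01.1]
    | succ i ih =>
      intro h2
      have hii : t i < t (i + 1) := ih (by omega)
      by_contra hcon
      push_neg at hcon
      have k1 := key i (i + 1) (by omega) (by omega)
      have k2 := key (i + 1) (i + 2) (by omega) h2
      have k3 := key i (i + 2) (by omega) h2
      rw [show i + 1 - i = 1 from by omega, Nat.mul_one] at k1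
      rw [show i + 2 - (i + 1) = 1 from by omega, Nat.mul_one] at k2
      rw [show i + 2 - i = 2 from by omega] at k3
      have hB1 := hb n hn
      have hB2 := hb (n * 2) (by omega)
      have hB2' : 2 * ((n : ℝ) * α) ≤ dist x₀ ((⇑h)^[n * 2] x₀) := by
        push_cast at hB2
        linarith
      have e1 : |t i - t (i + 1)| = t (i + 1) - t i := by
        rw [abs_of_nonpos (by linarith)]; ring
      have e2 : |t (i + 1) - t (i + 2)| = t (i + 1) - t (i + 2) :=
        abs_of_nonneg (by linarith)
      rw [e1] at k1
      rw [e2] at k2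
      rcases le_or_gt (t i) (t (i + 2)) with hpr | hrp
      · have e3 : |t i - t (i + 2)| = t (i + 2) - t i := by
          rw [abs_of_nonpos (by linarith)]; ring
        rw [e3] at k3
        linarith [k1.2, k2.1, k3.1]
      · have e3 : |t i - t (i + 2)| = t i - t (i + 2) :=
          abs_of_nonneg (by linarith)
        rw [e3] at k3
        linarith [k1.1, k2.2, k3.1]
  have main : ∀ j i : ℕ, i < j → j ≤ k → t i < t j := by
    intro j
    induction j with
    | zero => intro i h1 _; omega
    | succ j ihj =>
      intro i h1 h2
      rcases Nat.lt_or_ge i j with h' | h'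
      · exact lt_trans (ihj i h' (by omega)) (hcons j h2)
      · have : i = j := by omega
        subst this
        exact hcons i h2
  intro i j hij hjk
  exact main j i hij hjk
end

section
/- Key step in the proof of the Displacement lemma: Let X be a metric space, h an isometry of X with average displacement α(h) > 0, and x₀ ∈ X; write xⱼ = hʲ(x₀). Let R > 0, let n, k be positive integers with n > 3R/α(h), set m = kn, and let γ : [0,D] → X be a geodesic with γ(0) = x₀, γ(D) = xₘ, and D = d(x₀,xₘ). Suppose that for each i ∈ {0,1,…,k} there is a point zᵢ = γ(tᵢ) with d(x_{ni}, zᵢ) ≤ R, where t₀ = 0 and t_k = D. Then d(x₀, xₙ) ≤ d(x₀, xₘ)/k + 2R. -/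
/-- **Key step in the proof of the Displacement lemma**:
`d(x₀, xₙ) ≤ d(x₀, xₘ)/k + 2R` where `m = kn`. -/
theorem displacement_key_step {X : Type*} [MetricSpace X]
    (h : X ≃ᵢ X) (x₀ : X) (hα : 0 < avgDisp h x₀)
    (R : ℝ) (hR : 0 < R)
    (n k : ℕ) (hn : 0 < n) (hk : 0 < k)
    (hnR : 3 * R / avgDisp h x₀ < (n : ℝ))
    (D : ℝ) (hD : D = dist x₀ ((⇑h)^[k * n] x₀))
    (γ : ℝ → X) (hγ : IsGeodesicSegment γ x₀ ((⇑h)^[k * n] x₀))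
    (t : ℕ → ℝ) (ht0 : t 0 = 0) (htk : t k = D)
    (htmem : ∀ i ≤ k, t i ∈ Set.Icc 0 D)
    (hz : ∀ i ≤ k, dist ((⇑h)^[n * i] x₀) (γ (t i)) ≤ R) :
    dist x₀ ((⇑h)^[n] x₀) ≤ dist x₀ ((⇑h)^[k * n] x₀) / (k : ℝ) + 2 * R := by
  -- iterates of an isometry preserve distance
  have hiso : ∀ (j : ℕ) (a b : X), dist ((⇑h)^[j] a) ((⇑h)^[j] b) = dist a b := by
    intro j
    induction j with
    | zero => intro a b; simp
    | succ m ih =>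
      intro a b
      rw [Function.iterate_succ_apply', Function.iterate_succ_apply', h.dist_eq, ih]
  have distB : ∀ i j : ℕ, dist ((⇑h)^[i] x₀) ((⇑h)^[i + j] x₀) = dist x₀ ((⇑h)^[j] x₀) := by
    intro i j
    rw [Function.iterate_add_apply]
    exact hiso i _ _
  set α := avgDisp h x₀ with hαdef
  -- lower bound: m * α ≤ dist x₀ (h^[m] x₀)
  have bdd : BddBelow (Set.range fun p : ℕ+ => dist x₀ ((⇑h)^[(p : ℕ)] x₀) / (p : ℝ)) := by
    refine ⟨0, ?_⟩
    rintro y ⟨p, rfl⟩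
    positivity
  have lemA : ∀ m : ℕ, 0 < m → (m : ℝ) * α ≤ dist x₀ ((⇑h)^[m] x₀) := by
    intro m hm
    have h1 : α ≤ dist x₀ ((⇑h)^[((⟨m, hm⟩ : ℕ+) : ℕ)] x₀) / ((⟨m, hm⟩ : ℕ+) : ℝ) :=
      ciInf_le bdd (⟨m, hm⟩ : ℕ+)
    have hm' : (0 : ℝ) < (m : ℝ) := by exact_mod_cast hm
    rw [le_div_iff₀ hm'] at h1
    simpa [mul_comm] using h1
  have hnα : 3 * R < (n : ℝ) * α := by
    rw [div_lt_iff₀ hα] at hnR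
    linarith
  set L := dist x₀ ((⇑h)^[n] x₀) with hLdef
  have hLα : (n : ℝ) * α ≤ L := lemA n hn
  have hL2 : 2 * ((n : ℝ) * α) ≤ dist x₀ ((⇑h)^[2 * n] x₀) := by
    have := lemA (2 * n) (by positivity)
    push_cast at this
    linarith
  obtain ⟨hγ0, hγD, hγdist⟩ := hγ
  -- distance between points on the geodesic
  have hzz : ∀ i ≤ k, ∀ j ≤ k, dist (γ (t i)) (γ (t j)) = |t i - t j| := by
    intro i hi j hj
    have h1 := htmem i hi
    have h2 := htmem j hj
    rw [hD] at h1 h2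
    exact hγdist (t i) h1 (t j) h2
  -- key bounds from the triangle inequality
  have keyB : ∀ i ≤ k, ∀ j ≤ k,
      dist ((⇑h)^[n * i] x₀) ((⇑h)^[n * j] x₀) - 2 * R ≤ |t i - t j| ∧
      |t i - t j| ≤ dist ((⇑h)^[n * i] x₀) ((⇑h)^[n * j] x₀) + 2 * R := by
    intro i hi j hj
    have h1 := hz i hi
    have h2 := hz j hj
    have heq := hzz i hi j hj
    have tr1 := dist_triangle4 ((⇑h)^[n * i] x₀) (γ (t i)) (γ (t j)) ((⇑h)^[n * j] x₀)
    have tr2 := dist_triangle4 (γ (t i)) ((⇑h)^[n * i] x₀) ((⇑h)^[n * j] x₀) (γ (t j))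
    have hc1 : dist (γ (t j)) ((⇑h)^[n * j] x₀) = dist ((⇑h)^[n * j] x₀) (γ (t j)) :=
      dist_comm _ _
    have hc2 : dist (γ (t i)) ((⇑h)^[n * i] x₀) = dist ((⇑h)^[n * i] x₀) (γ (t i)) :=
      dist_comm _ _
    constructor
    · rw [heq] at tr1; linarith
    · rw [heq] at tr2; linarith
  have hdist1 : ∀ i : ℕ, dist ((⇑h)^[n * i] x₀) ((⇑h)^[n * (i + 1)] x₀) = L := by
    intro i
    have he : n * (i + 1) = n * i + n := by ring
    rw [he, distB]
  have hdist2 : ∀ i : ℕ, dist ((⇑h)^[n * i] x₀) ((⇑h)^[n * (i + 2)] x₀)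
      = dist x₀ ((⇑h)^[2 * n] x₀) := by
    intro i
    have he : n * (i + 2) = n * i + 2 * n := by ring
    rw [he, distB]
  -- all steps are at least L - 2R
  have step : ∀ i, i < k → L - 2 * R ≤ t (i + 1) - t i := by
    intro i
    induction i with
    | zero =>
      intro h0
      have hb := (keyB 0 (Nat.zero_le k) 1 h0).1
      rw [hdist1 0] at hb
      have ht1 : 0 ≤ t 1 - t 0 := by
        rw [ht0]
        simpa using (htmem 1 h0).1
      rw [abs_sub_comm, abs_of_nonneg ht1] at hb
      linarith
    | succ i ih =>
      intro hik
      have hi1 : i + 1 ≤ k := le_of_lt hik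
      have hi2 : i + 2 ≤ k := hik
      have hi0 : i ≤ k := by omega
      have prev := ih (by omega)
      -- upper bound on previous step
      have hup := (keyB i hi0 (i + 1) hi1).2
      rw [hdist1 i, abs_sub_comm] at hup
      have hupper : t (i + 1) - t i ≤ L + 2 * R := le_trans (le_abs_self _) hup
      -- bounds on current step
      have hcur := (keyB (i + 1) hi1 (i + 2) hi2).1
      rw [hdist1 (i + 1), abs_sub_comm] at hcur
      have hcurup := (keyB (i + 1) hi1 (i + 2) hi2).2
      rw [hdist1 (i + 1), abs_sub_comm] at hcurup
      by_contra hneg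
      push_neg at hneg
      have hLR : 0 < L - 2 * R := by linarith
      -- the current step must be strongly negative
      have hstepneg : t (i + 2) - t (i + 1) ≤ -(L - 2 * R) := by
        rcases le_or_gt (t (i + 2) - t (i + 1)) 0 with hle | hlt
        · rw [abs_of_nonpos hle] at hcur; linarith
        · rw [abs_of_pos hlt] at hcur; linarith
      have hstepneg2 : -(L + 2 * R) ≤ t (i + 2) - t (i + 1) := by
        have := neg_abs_le (t (i + 2) - t (i + 1))
        linarith
      -- two-step distance bound gives a contradiction
      have h2step := (keyB i hi0 (i + 2) hi2).1
      rw [hdist2 i, abs_sub_comm] at h2step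
      have h2abs : |t (i + 2) - t i| ≤ 4 * R := by
        have hsumeq : t (i + 2) - t i = (t (i + 1) - t i) + (t (i + 2) - t (i + 1)) := by
          ring
        rw [hsumeq, abs_le]
        constructor <;> linarith
      linarith
  -- sum the steps
  have hsum : ∑ i ∈ Finset.range k, (t (i + 1) - t i) = t k - t 0 :=
    Finset.sum_range_sub t k
  have hsumge : (k : ℝ) * (L - 2 * R) ≤ ∑ i ∈ Finset.range k, (t (i + 1) - t i) := by
    calc (k : ℝ) * (L - 2 * R) = ∑ _i ∈ Finset.range k, (L - 2 * R) := by
          rw [Finset.sum_const, Finset.card_range, nsmul_eq_mul]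
      _ ≤ ∑ i ∈ Finset.range k, (t (i + 1) - t i) := by
          refine Finset.sum_le_sum ?_
          intro i hi
          exact step i (Finset.mem_range.mp hi)
  have hDge : (k : ℝ) * (L - 2 * R) ≤ D := by
    rw [hsum, htk, ht0] at hsumge
    linarith
  have hk' : (0 : ℝ) < (k : ℝ) := by exact_mod_cast hk
  rw [← hD]
  have hfin : L - 2 * R ≤ D / (k : ℝ) := by
    rw [le_div_iff₀ hk']
    linarith [hDge]
  linarith
end

section
/- Displacement lemma (Lemma 5.1): Let X be a δ-hyperbolic geodesic metric space, let h be a hyperbolic isometry of X (that is, an isometry with average displacement α(h) > 0), and fix x ∈ X. Then there is a constant K ≥ 0 such that for all n ∈ ℕ, |d(x, hⁿ(x)) − n·α(h)| ≤ K. -/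
/-! ### Auxiliary machinery for the displacement lemma -/

section DispAux

variable {X : Type*} [MetricSpace X]

/-- The Gromov product of `a` and `b` seen from `p`. -/
noncomputable def dgp (p a b : X) : ℝ := (dist p a + dist p b - dist a b) / 2

lemma dgp_nonneg (p a b : X) : 0 ≤ dgp p a b := by
  have h1 := dist_triangle a p b
  have h2 : dist a p = dist p a := dist_comm a p
  unfold dgp; linarith

lemma dgp_comm (p a b : X) : dgp p a b = dgp p b a := by
  unfold dgp; rw [dist_comm a b]; ring

lemma dgp_add (p a b : X) : dgp p a b + dgp b a p = dist p b := by
  unfold dgp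
  rw [dist_comm b a, dist_comm b p, dist_comm a p]
  ring

lemma dgp_between (p a b q : X) (hq : dist a q + dist q b = dist a b) :
    dgp p a b ≤ dist p q := by
  have h1 := dist_triangle p q a
  have h2 := dist_triangle p q b
  have h3 : dist q a = dist a q := dist_comm q a
  unfold dgp; linarith

lemma dgp_sub1 (p a c : X) : dgp p a c = dist a p - dgp a p c := by
  unfold dgp; rw [dist_comm p a, dist_comm p c]; ring

lemma dgp_sub2 (p a c : X) : dgp p a c = dist p c - dist a c + dgp a p c := by
  unfold dgp; rw [dist_comm p a]; ring

lemma geoDistLeft {γ : ℝ → X} {u v : X} (hγ : IsGeodesicSegment γ u v)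
    {s : ℝ} (hs : s ∈ Set.Icc (0:ℝ) (dist u v)) : dist u (γ s) = s := by
  obtain ⟨h0, hv, hiso⟩ := hγ
  have h := hiso 0 ⟨le_refl _, dist_nonneg⟩ s hs
  rw [h0] at h
  rw [h, zero_sub, abs_neg, abs_of_nonneg hs.1]

lemma geoDistRight {γ : ℝ → X} {u v : X} (hγ : IsGeodesicSegment γ u v)
    {s : ℝ} (hs : s ∈ Set.Icc (0:ℝ) (dist u v)) : dist (γ s) v = dist u v - s := by
  obtain ⟨h0, hv, hiso⟩ := hγ
  have h := hiso s hs (dist u v) ⟨dist_nonneg, le_refl _⟩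
  rw [hv] at h
  rw [h, abs_of_nonpos (by linarith [hs.2]), neg_sub]

lemma iterDistAux (h : X ≃ᵢ X) (n : ℕ) (a b : X) :
    dist ((⇑h)^[n] a) ((⇑h)^[n] b) = dist a b := by
  induction n generalizing a b with
  | zero => simp
  | succ n ih =>
    rw [Function.iterate_succ_apply, Function.iterate_succ_apply, ih, h.dist_eq]

lemma dgp_iter (h : X ≃ᵢ X) (m : ℕ) (p a b : X) :
    dgp ((⇑h)^[m] p) ((⇑h)^[m] a) ((⇑h)^[m] b) = dgp p a b := by
  unfold dgp
  rw [iterDistAux, iterDistAux, iterDistAux]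

lemma distSubaddAux (h : X ≃ᵢ X) (p : X) (m n : ℕ) :
    dist p ((⇑h)^[m+n] p) ≤ dist p ((⇑h)^[m] p) + dist p ((⇑h)^[n] p) := by
  have h1 := dist_triangle p ((⇑h)^[m] p) ((⇑h)^[m+n] p)
  have h2 : dist ((⇑h)^[m] p) ((⇑h)^[m+n] p) = dist p ((⇑h)^[n] p) := by
    rw [Function.iterate_add_apply]
    exact iterDistAux h m p _
  linarith

lemma distMulAux (h : X ≃ᵢ X) (p : X) (k n : ℕ) :
    dist p ((⇑h)^[k*n] p) ≤ (k:ℝ) * dist p ((⇑h)^[n] p) := by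
  induction k with
  | zero => simp
  | succ k ih =>
    have h1 : (k+1)*n = k*n + n := by ring
    rw [h1]
    have h2 := distSubaddAux h p (k*n) n
    push_cast
    linarith

lemma avgLeAux (h : X ≃ᵢ X) (x : X) (n : ℕ) (hn : 1 ≤ n) :
    (n:ℝ) * avgDisp h x ≤ dist x ((⇑h)^[n] x) := by
  have h1 : avgDisp h x ≤ dist x ((⇑h)^[n] x) / (n:ℝ) := by
    unfold avgDisp
    refine ciInf_le ⟨0, ?_⟩ (⟨n, hn⟩ : ℕ+)
    rintro y ⟨m, rfl⟩
    exact div_nonneg dist_nonneg (by positivity)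
  have hn0 : (0:ℝ) < n := by exact_mod_cast hn
  rw [le_div_iff₀ hn0] at h1
  nlinarith [h1]

lemma avgGeAux (h : X ≃ᵢ X) (x : X) (a : ℝ)
    (H : ∀ n : ℕ+, a ≤ dist x ((⇑h)^[(n:ℕ)] x) / ((n:ℕ):ℝ)) : a ≤ avgDisp h x := by
  unfold avgDisp
  exact le_ciInf fun n => H n

lemma avgLeAnyAux (h : X ≃ᵢ X) (x p : X) (n : ℕ) (hn : 1 ≤ n) :
    (n:ℝ) * avgDisp h x ≤ dist p ((⇑h)^[n] p) := by
  have key : ∀ k : ℕ, 1 ≤ k →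
      (n:ℝ) * avgDisp h x ≤ dist p ((⇑h)^[n] p) + 2 * dist x p / (k:ℝ) := by
    intro k hk
    have hkn : 1 ≤ k * n := Nat.one_le_iff_ne_zero.mpr (Nat.mul_ne_zero (by omega) (by omega))
    have h1 := avgLeAux h x (k*n) hkn
    have h2 : dist x ((⇑h)^[k*n] x) ≤ dist x p + dist p ((⇑h)^[k*n] p) + dist p x := by
      have := dist_triangle4 x p ((⇑h)^[k*n] p) ((⇑h)^[k*n] x)
      rwa [iterDistAux h (k*n) p x] at this
    have h3 := distMulAux h p k n
    have hk0 : (0:ℝ) < (k:ℝ) := by exact_mod_cast hk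
    have hdc : dist p x = dist x p := dist_comm _ _
    have hgoal : (k:ℝ) * ((n:ℝ) * avgDisp h x) ≤ (k:ℝ) * dist p ((⇑h)^[n] p) + 2 * dist x p := by
      push_cast at h1
      nlinarith [h1, h2, h3, hdc]
    have h4 : (n:ℝ) * avgDisp h x ≤ ((k:ℝ) * dist p ((⇑h)^[n] p) + 2 * dist x p) / (k:ℝ) := by
      rw [le_div_iff₀ hk0]; nlinarith [hgoal]
    calc (n:ℝ) * avgDisp h x ≤ _ := h4
      _ = dist p ((⇑h)^[n] p) + 2 * dist x p / (k:ℝ) := by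
          rw [add_div, mul_div_cancel_left₀ _ (ne_of_gt hk0)]
  have lim : Filter.Tendsto (fun k : ℕ => dist p ((⇑h)^[n] p) + 2 * dist x p / (k:ℝ))
      Filter.atTop (nhds (dist p ((⇑h)^[n] p) + 0)) :=
    Filter.Tendsto.add tendsto_const_nhds (tendsto_const_div_atTop_nhds_zero_nat _)
  have := ge_of_tendsto lim (Filter.eventually_atTop.mpr ⟨1, key⟩)
  linarith [this]

/-- The four-point inequality (in Gromov product form) follows from thin triangles. -/
lemma fourptAux {δ : ℝ} (hgeo : GeodesicSpace X) (hhyp : DeltaHyperbolic X δ)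
    (p a b c : X) :
    dgp p a b ≤ dgp p a c + 3*δ ∨ dgp p b c ≤ dgp p a c + 3*δ := by
  obtain ⟨γac, hγac⟩ := hgeo a c
  have hstep1 : ∃ t ∈ Set.Icc (0:ℝ) (dist a c), dist p (γac t) ≤ dgp p a c + 2*δ := by
    obtain ⟨γ1, hγ1⟩ := hgeo a p
    obtain ⟨γ2, hγ2⟩ := hgeo p c
    have ht0 : 0 ≤ dgp a p c := dgp_nonneg a p c
    have htle : dgp a p c ≤ dist a c := by
      have h1 := dist_triangle a c p
      have h2 : dist c p = dist p c := dist_comm c p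
      unfold dgp; linarith
    have htmem : dgp a p c ∈ Set.Icc (0:ℝ) (dist a c) := ⟨ht0, htle⟩
    obtain ⟨q, hq, hpq⟩ := hhyp a p c γ1 γ2 γac hγ1 hγ2 hγac (γac (dgp a p c))
      ⟨dgp a p c, htmem, rfl⟩
    refine ⟨dgp a p c, htmem, ?_⟩
    have hwa : dist a (γac (dgp a p c)) = dgp a p c := geoDistLeft hγac htmem
    have hwc : dist (γac (dgp a p c)) c = dist a c - dgp a p c := geoDistRight hγac htmem
    rcases hq with ⟨s, hsm, rfl⟩ | ⟨v, hvm, rfl⟩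
    · have h1 : dist a (γ1 s) = s := geoDistLeft hγ1 hsm
      have h2 : dist (γ1 s) p = dist a p - s := geoDistRight hγ1 hsm
      have h3 := dist_triangle a (γ1 s) (γac (dgp a p c))
      have h4 := dist_triangle p (γ1 s) (γac (dgp a p c))
      have c1 : dist p (γ1 s) = dist (γ1 s) p := dist_comm _ _
      have c2 : dist (γ1 s) (γac (dgp a p c)) = dist (γac (dgp a p c)) (γ1 s) := dist_comm _ _
      have hkey := dgp_sub1 p a c
      linarith [hpq, h1, h2, h3, h4, c1, c2, hkey]
    · have h1 : dist p (γ2 v) = v := geoDistLeft hγ2 hvm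
      have h2 : dist (γ2 v) c = dist p c - v := geoDistRight hγ2 hvm
      have h3 := dist_triangle (γac (dgp a p c)) (γ2 v) c
      have h4 := dist_triangle p (γ2 v) (γac (dgp a p c))
      have c1 : dist (γ2 v) (γac (dgp a p c)) = dist (γac (dgp a p c)) (γ2 v) := dist_comm _ _
      have hkey := dgp_sub2 p a c
      linarith [hpq, h1, h2, h3, h4, c1, hkey]
  obtain ⟨t, htmem, hpw⟩ := hstep1
  obtain ⟨γ1, hγ1⟩ := hgeo a b
  obtain ⟨γ2, hγ2⟩ := hgeo b c
  obtain ⟨q, hq, hwq⟩ := hhyp a b c γ1 γ2 γac hγ1 hγ2 hγac (γac t) ⟨t, htmem, rfl⟩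
  rcases hq with ⟨s, hsm, rfl⟩ | ⟨v, hvm, rfl⟩
  · left
    have hbet : dist a (γ1 s) + dist (γ1 s) b = dist a b := by
      rw [geoDistLeft hγ1 hsm, geoDistRight hγ1 hsm]; ring
    have h1 := dgp_between p a b (γ1 s) hbet
    have h2 := dist_triangle p (γac t) (γ1 s)
    linarith [hwq, hpw, h1, h2]
  · right
    have hbet : dist b (γ2 v) + dist (γ2 v) c = dist b c := by
      rw [geoDistLeft hγ2 hvm, geoDistRight hγ2 hvm]; ring
    have h1 := dgp_between p b c (γ2 v) hbet
    have h2 := dist_triangle p (γac t) (γ2 v)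
    linarith [hwq, hpw, h1, h2]

/-- Chain lemma, first form: along a chain with equal steps `L` and consecutive
Gromov products at most `c`, the product of the origin and the next point stays small. -/
lemma chainQAux (D c L : ℝ) (hD : 0 ≤ D) (hc : 0 ≤ c)
    (H4 : ∀ p a b c' : X, dgp p a b ≤ dgp p a c' + D ∨ dgp p b c' ≤ dgp p a c' + D)
    (z : ℕ → X) (n : ℕ)
    (hsteps : ∀ i, i + 1 ≤ n → dist (z i) (z (i+1)) = L)
    (hprod : ∀ i, i + 2 ≤ n → dgp (z (i+1)) (z i) (z (i+2)) ≤ c)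
    (hL : 2*c + 3*D + 1 ≤ L) :
    ∀ i, i + 1 ≤ n → dgp (z i) (z 0) (z (i+1)) ≤ c + D := by
  intro i
  induction i with
  | zero =>
    intro _
    show dgp (z 0) (z 0) (z 1) ≤ c + D
    have h0 : dgp (z 0) (z 0) (z 1) = 0 := by
      unfold dgp; rw [dist_self]; ring
    rw [h0]; linarith
  | succ i ih =>
    intro hin
    show dgp (z (i+1)) (z 0) (z (i+2)) ≤ c + D
    have ihi := ih (by omega)
    have hp : dgp (z (i+1)) (z (i+2)) (z i) ≤ c := by
      have hpr := hprod i (by omega)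
      exact (dgp_comm (z (i+1)) (z (i+2)) (z i)).trans_le hpr
    rcases H4 (z (i+1)) (z (i+2)) (z 0) (z i) with hca | hcb
    · have hcg : dgp (z (i+1)) (z 0) (z (i+2)) = dgp (z (i+1)) (z (i+2)) (z 0) :=
        dgp_comm _ _ _
      rw [hcg]
      linarith [hca, hp]
    · exfalso
      have hid := dgp_add (z (i+1)) (z 0) (z i)
      have hst : dist (z i) (z (i+1)) = L := hsteps i (by omega)
      have hdc : dist (z (i+1)) (z i) = dist (z i) (z (i+1)) := dist_comm _ _
      linarith [hcb, hp, hid, ihi, hst, hdc]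

/-- Chain lemma, far form: any Gromov product of the origin and a later point,
seen from an intermediate point, is small. -/
lemma chainFarAux (D c L : ℝ) (hD : 0 ≤ D) (hc : 0 ≤ c)
    (H4 : ∀ p a b c' : X, dgp p a b ≤ dgp p a c' + D ∨ dgp p b c' ≤ dgp p a c' + D)
    (z : ℕ → X) (n : ℕ)
    (hsteps : ∀ i, i + 1 ≤ n → dist (z i) (z (i+1)) = L)
    (hprod : ∀ i, i + 2 ≤ n → dgp (z (i+1)) (z i) (z (i+2)) ≤ c)
    (hL : 2*c + 3*D + 1 ≤ L) :
    ∀ i j, 1 ≤ i → i < j → j ≤ n → dgp (z i) (z 0) (z j) ≤ c + 2*D := by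
  intro i j hi hij hjn
  by_cases hj1 : j = i + 1
  · subst hj1
    have := chainQAux D c L hD hc H4 z n hsteps hprod hL i (by omega)
    linarith
  · have hj2 : i + 2 ≤ j := by omega
    have hrev : dgp (z (i+1)) (z j) (z i) ≤ c + D := by
      have hsteps' : ∀ m, m + 1 ≤ j → dist (z (j - m)) (z (j - (m+1))) = L := by
        intro m hm
        rw [dist_comm, show j - m = (j - (m+1)) + 1 from by omega]
        exact hsteps _ (by omega)
      have hprod' : ∀ m, m + 2 ≤ j → dgp (z (j - (m+1))) (z (j - m)) (z (j - (m+2))) ≤ c := by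
        intro m hm
        rw [show j - (m+1) = (j - (m+2)) + 1 from by omega,
            show j - m = (j - (m+2)) + 2 from by omega]
        have hpr := hprod (j - (m+2)) (by omega)
        exact (dgp_comm _ _ _).trans_le hpr
      have hQ := chainQAux D c L hD hc H4 (fun m => z (j - m)) j
        (fun m hm => hsteps' m hm) (fun m hm => hprod' m hm) hL (j - i - 1) (by omega)
      have hQ' : dgp (z (j - (j - i - 1))) (z (j - 0)) (z (j - (j - i - 1 + 1))) ≤ c + D := hQ
      rw [show j - (j - i - 1) = i + 1 from by omega, show j - 0 = j from rfl,
          show j - (j - i - 1 + 1) = i from by omega] at hQ'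
      exact hQ'
    rcases H4 (z i) (z 0) (z j) (z (i+1)) with hca | hcb
    · have hq := chainQAux D c L hD hc H4 z n hsteps hprod hL i (by omega)
      linarith
    · exfalso
      have hq := chainQAux D c L hD hc H4 z n hsteps hprod hL i (by omega)
      have hid := dgp_add (z i) (z j) (z (i+1))
      have hst : dist (z i) (z (i+1)) = L := hsteps i (by omega)
      linarith [hcb, hq, hid, hrev, hst]

/-- Key geometric bound: for `n` with `nα` large compared with `δ`, the Gromov
product `(x, h^{2n} x)` seen from `hⁿ x` is controlled by the defect `d_n - nα`. -/
lemma gromovBoundAux {δ : ℝ} (hδ : 0 ≤ δ)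
    (hgeo : GeodesicSpace X) (hhyp : DeltaHyperbolic X δ)
    (h : X ≃ᵢ X) (x : X) (n : ℕ) (hn : 1 ≤ n)
    (hna : 2*δ + 2 ≤ (n:ℝ) * avgDisp h x) :
    2 * dgp ((⇑h)^[n] x) x ((⇑h)^[2*n] x) ≤
      (dist x ((⇑h)^[n] x) - (n:ℝ) * avgDisp h x) + 4*δ + 2 := by
  obtain ⟨γ, hγ⟩ := hgeo x ((⇑h)^[n] x)
  set α := avgDisp h x with hαd
  set dn := dist x ((⇑h)^[n] x) with hdn
  clear_value α dn
  have hdlow : (n:ℝ)*α ≤ dn := by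
    have := avgLeAux h x n hn
    rw [← hαd, ← hdn] at this
    exact this
  set s : ℝ := (dn - (n:ℝ)*α)/2 + δ + 1 with hsd
  clear_value s
  have hs0 : 0 ≤ s := by rw [hsd]; linarith
  have hs2 : 2*s ≤ dn := by rw [hsd]; linarith
  have hmem : dn - s ∈ Set.Icc (0:ℝ) dn := ⟨by linarith, by linarith⟩
  have hmem' : dn - s ∈ Set.Icc (0:ℝ) (dist x ((⇑h)^[n] x)) := by rw [← hdn]; exact hmem
  have hd2 : dist ((⇑h)^[2*n] x) ((⇑h)^[n] x) = dn := by
    rw [two_mul, Function.iterate_add_apply, iterDistAux h n ((⇑h)^[n] x) x]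
    rw [dist_comm]; exact hdn.symm
  set γ2 : ℝ → X := fun v => (⇑h)^[n] (γ (dn - v)) with hγ2d
  have hγdn : γ dn = (⇑h)^[n] x := by
    have h21 := hγ.2.1
    rwa [← hdn] at h21
  have hγ2 : IsGeodesicSegment γ2 ((⇑h)^[2*n] x) ((⇑h)^[n] x) := by
    refine ⟨?_, ?_, ?_⟩
    · show (⇑h)^[n] (γ (dn - 0)) = (⇑h)^[2*n] x
      rw [sub_zero, hγdn, two_mul, Function.iterate_add_apply]
    · show (⇑h)^[n] (γ (dn - dist ((⇑h)^[2*n] x) ((⇑h)^[n] x))) = (⇑h)^[n] x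
      rw [hd2, sub_self, hγ.1]
    · intro s1 hs1 t1 ht1
      rw [hd2] at hs1 ht1
      show dist ((⇑h)^[n] (γ (dn - s1))) ((⇑h)^[n] (γ (dn - t1))) = |s1 - t1|
      rw [iterDistAux]
      have hgeq := hγ.2.2 (dn - s1)
        (by rw [← hdn]; exact ⟨by linarith [hs1.2], by linarith [hs1.1]⟩) (dn - t1)
        (by rw [← hdn]; exact ⟨by linarith [ht1.2], by linarith [ht1.1]⟩)
      rw [hgeq, show dn - s1 - (dn - t1) = -(s1 - t1) from by ring, abs_neg]
  obtain ⟨γ1, hγ1⟩ := hgeo x ((⇑h)^[2*n] x)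
  have hpmem : γ (dn - s) ∈ γ '' Set.Icc 0 (dist x ((⇑h)^[n] x)) := ⟨dn - s, hmem', rfl⟩
  obtain ⟨q, hqmem, hpq⟩ := hhyp x ((⇑h)^[2*n] x) ((⇑h)^[n] x) γ1 γ2 γ hγ1 hγ2 hγ
    (γ (dn - s)) hpmem
  have hpx : dist x (γ (dn - s)) = dn - s := geoDistLeft hγ hmem'
  have hpfn : dist (γ (dn - s)) ((⇑h)^[n] x) = s := by
    have hgr := geoDistRight hγ hmem'
    rw [hgr, ← hdn]; ring
  rcases hqmem with ⟨w, hw, rfl⟩ | ⟨v, hv, rfl⟩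
  · have e1 : dist x (γ1 w) = w := geoDistLeft hγ1 hw
    have e2 : dist (γ1 w) ((⇑h)^[2*n] x) = dist x ((⇑h)^[2*n] x) - w := geoDistRight hγ1 hw
    have t1 := dist_triangle x (γ1 w) (γ (dn - s))
    have t2 := dist_triangle (γ (dn - s)) (γ1 w) ((⇑h)^[2*n] x)
    have t3 := dist_triangle ((⇑h)^[n] x) (γ (dn - s)) ((⇑h)^[2*n] x)
    have c1 : dist (γ1 w) (γ (dn - s)) = dist (γ (dn - s)) (γ1 w) := dist_comm _ _
    have c2 : dist ((⇑h)^[n] x) (γ (dn - s)) = dist (γ (dn - s)) ((⇑h)^[n] x) := dist_comm _ _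
    have c3 : dist ((⇑h)^[n] x) ((⇑h)^[2*n] x) = dist ((⇑h)^[2*n] x) ((⇑h)^[n] x) :=
      dist_comm _ _
    have c4 : dist ((⇑h)^[n] x) x = dist x ((⇑h)^[n] x) := dist_comm _ _
    unfold dgp
    rw [c4, ← hdn]
    linarith [hpq, e1, e2, t1, t2, t3, c1, c2, c3, hd2, hpx, hpfn, hsd.ge, hsd.le]
  · exfalso
    have e1 : dist (γ2 v) ((⇑h)^[n] x) = dn - v := by
      have hgr := geoDistRight hγ2 hv
      rw [hgr, hd2]
    have e2 : dist (γ2 v) (γ2 s) = |v - s| := by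
      refine hγ2.2.2 v hv s ?_
      rw [hd2]; exact ⟨hs0, by linarith⟩
    have e3 : γ2 s = (⇑h)^[n] (γ (dn - s)) := by rw [hγ2d]
    have habs : |dn - v - s| ≤ δ := by
      have h1 := abs_dist_sub_le (γ2 v) (γ (dn - s)) ((⇑h)^[n] x)
      rw [e1, hpfn] at h1
      refine h1.trans ?_
      rw [dist_comm]; exact hpq
    have hdisp := avgLeAnyAux h x (γ (dn - s)) n hn
    rw [← hαd] at hdisp
    have t1 := dist_triangle (γ (dn - s)) (γ2 v) (γ2 s)
    rw [e2, e3] at t1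
    have habs2 : |v - s| ≤ |v - (dn - s)| + |(dn - s) - s| := abs_sub_le v (dn - s) s
    have habs3 : |v - (dn - s)| = |dn - v - s| := by
      rw [show v - (dn - s) = -(dn - v - s) from by ring, abs_neg]
    have habs4 : |(dn - s) - s| = dn - 2*s := by
      rw [abs_of_nonneg (by linarith)]; ring
    linarith [hpq, hdisp, t1, habs, habs2, habs3, habs4, hsd.ge, hsd.le, hdlow]

end DispAux

set_option maxHeartbeats 2000000 in
/-- **Displacement lemma** (Lemma 5.1): for a hyperbolic isometry `h` of a
`δ`-hyperbolic geodesic space and a fixed point `x`, there is a constant `K` with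
`|d(x, hⁿ(x)) - n·α(h)| ≤ K` for all `n`. -/
theorem displacement_lemma {X : Type*} [MetricSpace X] (δ : ℝ) (hδ : 0 ≤ δ)
    (hgeo : GeodesicSpace X) (hhyp : DeltaHyperbolic X δ)
    (h : X ≃ᵢ X) (x : X) (hα : 0 < avgDisp h x) :
    ∃ K : ℝ, 0 ≤ K ∧ ∀ n : ℕ, |dist x ((⇑h)^[n] x) - (n : ℝ) * avgDisp h x| ≤ K := by
  set α := avgDisp h x with hαd
  clear_value α
  have hα0 : 0 ≤ α := le_of_lt hα
  have hαne : α ≠ 0 := ne_of_gt hα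
  obtain ⟨N, hN1, hNα⟩ : ∃ N : ℕ, 1 ≤ N ∧ 13*δ + 3 ≤ (N:ℝ) * α := by
    refine ⟨⌈(13*δ+3)/α⌉₊ + 1, Nat.succ_le_succ (Nat.zero_le _), ?_⟩
    have h1 : (13*δ+3)/α ≤ ((⌈(13*δ+3)/α⌉₊ + 1 : ℕ) : ℝ) := by
      push_cast
      linarith [Nat.le_ceil ((13*δ+3)/α)]
    calc 13*δ+3 = ((13*δ+3)/α) * α := (div_mul_cancel₀ (13*δ+3) hαne).symm
      _ ≤ _ * α := mul_le_mul_of_nonneg_right h1 hα0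
  have hN0 : (0:ℝ) < N := by exact_mod_cast hN1
  set L := dist x ((⇑h)^[N] x) with hLd
  set c := dgp ((⇑h)^[N] x) x ((⇑h)^[2*N] x) with hcd
  clear_value L c
  have hc0 : 0 ≤ c := by rw [hcd]; exact dgp_nonneg _ _ _
  have hcb : 2*c ≤ (L - (N:ℝ)*α) + 4*δ + 2 := by
    have := gromovBoundAux hδ hgeo hhyp h x N hN1 (by rw [← hαd]; linarith)
    rw [← hαd, ← hLd, ← hcd] at this
    linarith
  have hLlow : (N:ℝ)*α ≤ L := by
    have := avgLeAux h x N hN1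
    rw [← hαd, ← hLd] at this
    exact this
  have hL : 2*c + 3*(3*δ) + 1 ≤ L := by linarith
  have hstepsf : ∀ m : ℕ, dist ((⇑h)^[m*N] x) ((⇑h)^[(m+1)*N] x) = L := by
    intro m
    rw [show (m+1)*N = m*N + N from by ring, Function.iterate_add_apply,
        iterDistAux h (m*N) x ((⇑h)^[N] x)]
    exact hLd.symm
  have hprodf : ∀ m : ℕ, dgp ((⇑h)^[(m+1)*N] x) ((⇑h)^[m*N] x) ((⇑h)^[(m+2)*N] x) ≤ c := by
    intro m
    rw [show (m+1)*N = m*N + N from by ring, show (m+2)*N = m*N + 2*N from by ring,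
        Function.iterate_add_apply, Function.iterate_add_apply,
        dgp_iter h (m*N) ((⇑h)^[N] x) x ((⇑h)^[2*N] x), ← hcd]
  have H4 : ∀ p a b c' : X, dgp p a b ≤ dgp p a c' + 3*δ ∨ dgp p b c' ≤ dgp p a c' + 3*δ :=
    fun p a b c' => fourptAux hgeo hhyp p a b c'
  have hsuper : ∀ i i' : ℕ, 1 ≤ i → 1 ≤ i' →
      dist x ((⇑h)^[i*N] x) + dist x ((⇑h)^[i'*N] x) - dist x ((⇑h)^[(i+i')*N] x)
        ≤ 2*c + 12*δ := by
    intro i i' hi hi'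
    have hfar := chainFarAux (3*δ) c L (by linarith) hc0 H4
        (fun m => (⇑h)^[m*N] x) (i+i')
        (fun m _ => hstepsf m) (fun m _ => hprodf m) hL i (i+i') hi (by omega) le_rfl
    have hfar' : dgp ((⇑h)^[i*N] x) ((⇑h)^[0*N] x) ((⇑h)^[(i+i')*N] x) ≤ c + 2*(3*δ) := hfar
    have hfar'' : dgp ((⇑h)^[i*N] x) x ((⇑h)^[(i+i')*N] x) ≤ c + 2*(3*δ) := by
      have e0 : (0*N : ℕ) = 0 := by ring
      rw [e0] at hfar'
      simpa using hfar'
    have e2 : dist ((⇑h)^[i*N] x) ((⇑h)^[(i+i')*N] x) = dist x ((⇑h)^[i'*N] x) := by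
      rw [show (i+i')*N = i*N + i'*N from by ring, Function.iterate_add_apply]
      exact iterDistAux h (i*N) x _
    have e1 : dist ((⇑h)^[i*N] x) x = dist x ((⇑h)^[i*N] x) := dist_comm _ _
    unfold dgp at hfar''
    linarith [hfar'', e1, e2]
  have hsuperit : ∀ i, 1 ≤ i → ∀ k : ℕ, 1 ≤ k →
      (k:ℝ) * dist x ((⇑h)^[i*N] x) - ((k:ℝ)-1) * (2*c + 12*δ)
        ≤ dist x ((⇑h)^[(k*i)*N] x) := by
    intro i hi k hk
    induction k, hk using Nat.le_induction with
    | base =>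
      have e : (1*i)*N = i*N := by ring
      rw [e]; push_cast; linarith
    | succ k hk1 ih =>
      have hki : 1 ≤ k*i := Nat.one_le_iff_ne_zero.mpr (Nat.mul_ne_zero (by omega) (by omega))
      have hs := hsuper (k*i) i hki hi
      rw [show k*i + i = (k+1)*i from by ring] at hs
      push_cast
      push_cast at ih
      linarith [hs, ih]
  have hdm : ∀ i : ℕ, 1 ≤ i → dist x ((⇑h)^[i*N] x) ≤ ((i:ℝ)*(N:ℝ)) * α + (2*c + 12*δ) := by
    intro i hi
    have hiN1 : 1 ≤ i*N := Nat.one_le_iff_ne_zero.mpr (Nat.mul_ne_zero (by omega) (by omega))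
    have hm0 : (0:ℝ) < ((i*N : ℕ):ℝ) := by exact_mod_cast hiN1
    have hterm : ∀ nn : ℕ+, (dist x ((⇑h)^[i*N] x) - (2*c+12*δ)) / ((i*N:ℕ):ℝ)
        ≤ dist x ((⇑h)^[(nn:ℕ)] x) / ((nn:ℕ):ℝ) := by
      intro nn
      have hn0 : (0:ℝ) < ((nn:ℕ):ℝ) := by exact_mod_cast nn.pos
      rw [div_le_div_iff₀ hm0 hn0]
      have k1 := hsuperit i hi (nn:ℕ) nn.pos
      have k2 : dist x ((⇑h)^[((nn:ℕ)*i)*N] x) ≤ ((i*N:ℕ):ℝ) * dist x ((⇑h)^[(nn:ℕ)] x) := by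
        rw [show ((nn:ℕ)*i)*N = (i*N)*(nn:ℕ) from by ring]
        exact distMulAux h x (i*N) (nn:ℕ)
      have hnn1 : (1:ℝ) ≤ ((nn:ℕ):ℝ) := by exact_mod_cast nn.pos
      have hC0 : (0:ℝ) ≤ 2*c+12*δ := by linarith
      push_cast at k1 k2 ⊢
      nlinarith [k1, k2, mul_nonneg (by linarith : (0:ℝ) ≤ ((nn:ℕ):ℝ) - 1) hC0]
    have hge := avgGeAux h x _ hterm
    rw [← hαd] at hge
    rw [div_le_iff₀ hm0] at hge
    push_cast at hge
    nlinarith [hge]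
  have hd1nn : (0:ℝ) ≤ dist x ((⇑h)^[1] x) := dist_nonneg
  refine ⟨(2*c + 12*δ) + (N:ℝ) * dist x ((⇑h)^[1] x),
    by nlinarith [hc0, hδ, hd1nn, hN0], ?_⟩
  intro n
  rw [abs_le]
  have hub : dist x ((⇑h)^[n] x) - (n:ℝ)*α ≤ (2*c + 12*δ) + (N:ℝ) * dist x ((⇑h)^[1] x) := by
    rcases lt_or_ge n N with hlt | hle
    · have h1 : dist x ((⇑h)^[n] x) ≤ (n:ℝ) * dist x ((⇑h)^[1] x) := by
        have := distMulAux h x n 1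
        rwa [Nat.mul_one] at this
      have h2 : (n:ℝ) ≤ (N:ℝ) := by exact_mod_cast hlt.le
      have h3 : 0 ≤ (n:ℝ)*α := mul_nonneg (Nat.cast_nonneg n) hα0
      nlinarith [h1, h2, h3, hd1nn, mul_le_mul_of_nonneg_right h2 hd1nn, hc0, hδ]
    · obtain ⟨q, r, hq1, hrN, hqr⟩ : ∃ q r : ℕ, 1 ≤ q ∧ r < N ∧ N*q + r = n :=
        ⟨n / N, n % N, (Nat.one_le_div_iff (by omega)).mpr hle, Nat.mod_lt _ (by omega),
          Nat.div_add_mod n N⟩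
      have h1 : dist x ((⇑h)^[n] x) ≤ dist x ((⇑h)^[N*q] x) + dist x ((⇑h)^[r] x) := by
        have := distSubaddAux h x (N*q) r
        rwa [hqr] at this
      have h2 : dist x ((⇑h)^[N*q] x) ≤ ((q:ℝ)*(N:ℝ)) * α + (2*c + 12*δ) := by
        have := hdm q hq1
        rwa [show q*N = N*q from by ring] at this
      have h3 : dist x ((⇑h)^[r] x) ≤ (r:ℝ) * dist x ((⇑h)^[1] x) := by
        have := distMulAux h x r 1
        rwa [Nat.mul_one] at this
      have h4 : (r:ℝ) ≤ (N:ℝ) := by exact_mod_cast hrN.le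
      have h5 : (q:ℝ)*(N:ℝ) ≤ (n:ℝ) := by
        have hle' : N*q ≤ n := by omega
        calc (q:ℝ)*(N:ℝ) = ((N*q : ℕ):ℝ) := by push_cast; ring
          _ ≤ (n:ℝ) := by exact_mod_cast hle'
      nlinarith [h1, h2, h3, h4, h5, hα0, hd1nn,
        mul_le_mul_of_nonneg_right h5 hα0, mul_le_mul_of_nonneg_right h4 hd1nn]
  refine ⟨?_, hub⟩
  rcases Nat.eq_zero_or_pos n with rfl | hn1
  · simp only [Function.iterate_zero, id_eq, dist_self, Nat.cast_zero, zero_mul, sub_zero]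
    nlinarith [hc0, hδ, hd1nn, hN0]
  · have hlo := avgLeAux h x n hn1
    rw [← hαd] at hlo
    nlinarith [hlo, hc0, hδ, hd1nn, hN0]
end
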